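/- arXiv:2308.07817 — 7 statements merged into one kernel-verified Lean document; each statement's English description precedes it below -/
import Mathlib

section
/- Let M ≥ 1 be a positive real and Q : ℕ → ℝ a nonnegative sequence with Q(1) = 0 such that Q(t+1) ≤ Q(t) + M for every t. Then for every horizon T ≥ 1, ∑_{t=1}^T Q(t) ≥ (max_{1 ≤ t ≤ T} Q(t))² / (4M). -/
/-!
Let the maximum `m` of `Q` on `[1, T]` be attained at `t₀`. Since increments are at most `M`,
going backwards from `t₀` the sequence loses at most `M` per step; as `Q 1 = 0` this forces
`t₀ - 1 ≥ m / M`, so the `K + 1` terms in the window `[t₀ - K, t₀]` with `K = ⌊m / (2M)⌋` all lie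
in `[1, T]` and are at least `m / 2`. Their sum is at least `(K + 1) m / 2 ≥ m² / (4M)`.
-/

open Finset

section BoundedIncrements

variable {Q : ℕ → ℝ} {M : ℝ}

theorem le_add_mul_of_forall_succ_le_add (hstep : ∀ t, Q (t + 1) ≤ Q t + M) (s k : ℕ) :
    Q (s + k) ≤ Q s + k * M := by
  induction k with
  | zero => simp
  | succ k ih =>
    rw [← add_assoc]
    push_cast
    linarith [hstep (s + k)]

theorem card_mul_sub_le_sum_Icc (hM : 0 ≤ M) (hstep : ∀ t, Q (t + 1) ≤ Q t + M)
    {K t : ℕ} (hK : K ≤ t) :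
    (K + 1) * (Q t - K * M) ≤ ∑ s ∈ Icc (t - K) t, Q s := by
  have hlow : ∀ s ∈ Icc (t - K) t, Q t - K * M ≤ Q s := by
    intro s hs
    obtain ⟨hs₁, hs₂⟩ := mem_Icc.1 hs
    have hdist : ((t - s : ℕ) : ℝ) ≤ K := by exact_mod_cast (by omega : t - s ≤ K)
    have hback := le_add_mul_of_forall_succ_le_add hstep s (t - s)
    rw [Nat.add_sub_cancel' hs₂] at hback
    nlinarith
  have hcard : #(Icc (t - K) t) = K + 1 := by rw [Nat.card_Icc]; omega
  simpa [hcard] using card_nsmul_le_sum _ _ _ hlow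

end BoundedIncrements

theorem sq_div_le_floor_add_one_mul {m M : ℝ} (hm : 0 ≤ m) (hM : 0 < M) :
    m ^ 2 / (4 * M) ≤ (⌊m / (2 * M)⌋₊ + 1) * (m - ⌊m / (2 * M)⌋₊ * M) := by
  set K := ⌊m / (2 * M)⌋₊
  have hK_le : (K : ℝ) * M ≤ m / 2 := by
    have := Nat.floor_le (div_nonneg hm (by positivity : (0 : ℝ) ≤ 2 * M))
    rw [le_div_iff₀ (by positivity)] at this
    linarith
  have hK_gt : m / (2 * M) < K + 1 := Nat.lt_floor_add_one _
  calc m ^ 2 / (4 * M) = m / (2 * M) * (m / 2) := by field_simp; ring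
    _ ≤ (K + 1) * (m / 2) := by gcongr
    _ ≤ (K + 1) * (m - K * M) := by gcongr; linarith

theorem stmt_1 (M : ℝ) (hM : 1 ≤ M) (Q : ℕ → ℝ)
    (hQpos : ∀ t : ℕ, 0 ≤ Q t) (hQ1 : Q 1 = 0)
    (hstep : ∀ t : ℕ, Q (t + 1) ≤ Q t + M)
    (T : ℕ) (hT : 1 ≤ T) :
    ((Finset.Icc 1 T).sup' (Finset.nonempty_Icc.2 hT) Q) ^ 2 / (4 * M)
      ≤ ∑ t ∈ Finset.Icc 1 T, Q t := by
  have hMpos : 0 < M := by linarith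
  obtain ⟨t₀, ht₀, hmax⟩ := exists_mem_eq_sup' (nonempty_Icc.2 hT) Q
  obtain ⟨ht₀₁, ht₀T⟩ := mem_Icc.1 ht₀
  rw [hmax]
  set K := ⌊Q t₀ / (2 * M)⌋₊
  have hK : K ≤ t₀ - 1 := by
    have hrise := le_add_mul_of_forall_succ_le_add hstep 1 (t₀ - 1)
    rw [Nat.add_sub_cancel' ht₀₁, hQ1, zero_add] at hrise
    refine Nat.floor_le_of_le ?_
    rw [div_le_iff₀ (by positivity)]
    nlinarith [hQpos t₀]
  calc Q t₀ ^ 2 / (4 * M) ≤ (K + 1) * (Q t₀ - K * M) :=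
        sq_div_le_floor_add_one_mul (hQpos t₀) hMpos
    _ ≤ ∑ t ∈ Icc (t₀ - K) t₀, Q t := card_mul_sub_le_sum_Icc hMpos.le hstep (by omega)
    _ ≤ ∑ t ∈ Icc 1 T, Q t :=
        sum_le_sum_of_subset_of_nonneg (Icc_subset_Icc (by omega) ht₀T) fun t _ _ => hQpos t
end

section
/- Let ω_1 ≥ ω_2 ≥ ⋯ ≥ ω_C be a nonincreasing sequence of positive real numbers. Then 1/ω_1 + ∑_{i=2}^C ω_i (1/ω_i² − 1/ω_{i−1}²) ≤ 2/ω_C. -/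
/-!
Each summand is dominated by a telescoping increment: for `0 < b ≤ a`,
`b (1/b² - 1/a²) ≤ 2/b - 2/a`, the difference being `(a - b)² / (a² b)`. Summing, the left-hand
side is at most `1/ω₁ + 2/ω_C - 2/ω₁ ≤ 2/ω_C`.
-/

open Finset

lemma mul_one_div_sq_sub_one_div_sq_le {a b : ℝ} (hb : 0 < b) (hba : b ≤ a) :
    b * (1 / b ^ 2 - 1 / a ^ 2) ≤ 2 / b - 2 / a := by
  have ha : 0 < a := hb.trans_le hba
  have hgap : 2 / b - 2 / a - b * (1 / b ^ 2 - 1 / a ^ 2) = (a - b) ^ 2 / (a ^ 2 * b) := by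
    field_simp
    ring
  have : 0 ≤ (a - b) ^ 2 / (a ^ 2 * b) := by positivity
  linarith

lemma Finset.sum_Icc_sub_pred {M : Type*} [AddCommGroup M] (f : ℕ → M) {m n : ℕ} (hmn : m ≤ n) :
    ∑ i ∈ Icc (m + 1) n, (f i - f (i - 1)) = f n - f m := by
  rw [← Ico_add_one_right_eq_Icc, ← sum_Ico_add' (fun i => f i - f (i - 1)) m n 1,
    ← sum_Ico_sub f hmn]
  simp only [Nat.add_sub_cancel]

theorem stmt_3 (C : ℕ) (hC : 1 ≤ C) (ω : ℕ → ℝ)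
    (hpos : ∀ i ∈ Finset.Icc 1 C, 0 < ω i)
    (hmono : ∀ i ∈ Finset.Icc 2 C, ω i ≤ ω (i - 1)) :
    1 / ω 1 + ∑ i ∈ Finset.Icc 2 C, ω i * (1 / (ω i) ^ 2 - 1 / (ω (i - 1)) ^ 2)
      ≤ 2 / ω C := by
  have hω₁ : 0 < ω 1 := hpos 1 (by simp [hC])
  calc 1 / ω 1 + ∑ i ∈ Icc 2 C, ω i * (1 / (ω i) ^ 2 - 1 / (ω (i - 1)) ^ 2)
      ≤ 1 / ω 1 + ∑ i ∈ Icc 2 C, (2 / ω i - 2 / ω (i - 1)) := by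
        gcongr with i hi
        have hi' : i ∈ Icc 1 C := by grind
        exact mul_one_div_sq_sub_one_div_sq_le (hpos i hi') (hmono i hi)
    _ = 2 / ω C - 1 / ω 1 := by
        rw [sum_Icc_sub_pred (fun i => 2 / ω i) hC]
        ring
    _ ≤ 2 / ω C := by
        have : 0 < 1 / ω 1 := by positivity
        linarith
end

section
/- Let (Γ(t))_{t ≥ 0} be an adapted real-valued process with respect to a filtration (F_t), and let K, η, D > 0 with η ≤ K. Assume (i) |Γ(t+1) − Γ(t)| ≤ K almost surely, (ii) E[Γ(t+1) − Γ(t) | F_t] ≤ −η on the event {Γ(t) ≥ D}, and (iii) Γ(0) ≤ K + D. Then for every t, E[Γ(t)] ≤ K(1 + ⌈D/K⌉) + K(K − η)/(2η). -/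
/-!
Rescale to `Y t = max ((Γ t - a) / K) 0`: a process reflected at `0` whose increments lie in
`[-1, 1]` and whose conditional drift is at most `-β`, `β = η / K`, wherever it is positive.
It is compared with the walk stepping `+1` with probability `(1 - β) / 2` and `-1` otherwise,
through the whole stop-loss transform `c ↦ E[(Y t - c)⁺]`. Convexity of `x ↦ (x - c)⁺` turns
the drift hypothesis into a linear recursion for the stop-loss transform in `t`, and an explicit
supersolution of it, decaying geometrically with ratio `(1 - β) / (1 + β)` per unit of level,
bounds it for all `t` by induction. At `c = 0` this gives `E[Y t] ≤ (1 + β) / (2 β)`.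
-/

open MeasureTheory

lemma max_sub_le_chord {y y' d c : ℝ} (hc : 0 ≤ c) (hd : |d| ≤ 1) (hy' : y' ≤ max (y + d) 0) :
    max (y' - c) 0 ≤ max (y - (c + 1)) 0
      + (max (y - (c - 1)) 0 - max (y - (c + 1)) 0) / 2 * (1 + d) := by
  obtain ⟨hd₁, hd₂⟩ := abs_le.mp hd
  have hreflect : max (y' - c) 0 ≤ max (y + d - c) 0 := by
    refine max_le ?_ (le_max_right _ _)
    rcases le_total (y + d) 0 with h | h
    · rw [max_eq_right h] at hy'; linarith [le_max_right (y + d - c) 0]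
    · rw [max_eq_left h] at hy'; linarith [le_max_left (y + d - c) 0]
  refine hreflect.trans ?_
  rcases le_total (y - (c - 1)) 0 with h | h
  · rw [max_eq_right h, max_eq_right (by linarith), max_eq_right (by linarith)]
    norm_num
  rcases le_total 0 (y - (c + 1)) with h' | h'
  · rw [max_eq_left h, max_eq_left h', max_eq_left (by linarith)]
    linarith
  rw [max_eq_left h, max_eq_right h']
  rcases le_total (y + d - c) 0 with h'' | h''
  · rw [max_eq_right h'']; nlinarith
  · rw [max_eq_left h'']; nlinarith

lemma chord_le_of_drift {β y c e : ℝ} (hβ : 0 ≤ β) (hy : 0 ≤ y) (hc : 0 ≤ c) (he : e ≤ 1)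
    (hdrift : 0 < y → e ≤ -β) :
    max (y - (c + 1)) 0 + (max (y - (c - 1)) 0 - max (y - (c + 1)) 0) / 2 * (1 + e)
      ≤ (1 + β) / 2 * max (y - (c + 1)) 0 + (1 - β) / 2 * max (y - (c - 1)) 0
        + (1 + β) / 2 * max (1 - c) 0 * (1 - (y - max (y - 1) 0)) := by
  have hH : 0 ≤ max (y - (c - 1)) 0 - max (y - (c + 1)) 0 :=
    sub_nonneg.mpr (max_le_max (by linarith) le_rfl)
  rcases hy.eq_or_lt with rfl | hy
  · rw [max_eq_right (by linarith : (0:ℝ) - (c + 1) ≤ 0), max_eq_right (by norm_num : (0:ℝ) - 1 ≤ 0),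
      zero_sub, neg_sub]
    nlinarith [le_max_right (1 - c) 0]
  · have hmin : 0 ≤ 1 - (y - max (y - 1) 0) := by linarith [le_max_left (y - 1) 0]
    have := mul_le_mul_of_nonneg_left (add_le_add_left (hdrift hy) 1) (div_nonneg hH zero_le_two)
    have := mul_nonneg (mul_nonneg (by linarith : 0 ≤ (1 + β) / 2) (le_max_right (1 - c) 0)) hmin
    linarith

/- Each affine piece turns one of the two cases of `driftProfile_supersolution` into an
equality. -/
noncomputable def driftProfile (β x : ℝ) : ℝ :=
  max ((1 + β) / (2 * β) - 2 * x / (1 + β)) ((1 - β) / (1 + β) * ((1 + β) / (2 * β) + 1 - x))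

noncomputable def stopLossBound (β c : ℝ) : ℝ :=
  ((1 - β) / (1 + β)) ^ ⌊c⌋₊ * driftProfile β (c - ⌊c⌋₊)

section DriftProfile
variable {β : ℝ}

lemma driftProfile_zero (hβ : 0 < β) : driftProfile β 0 = (1 + β) / (2 * β) := by
  rw [driftProfile, max_eq_left]
  · ring
  · rw [← sub_nonneg]
    field_simp
    nlinarith

lemma one_sub_le_driftProfile (hβ : 0 < β) (hβ1 : β ≤ 1) {x : ℝ} (hx : x ≤ 1) :
    1 - x ≤ driftProfile β x := by
  refine le_trans ?_ (le_max_left _ _)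
  rw [← sub_nonneg]
  have e : (1 + β) / (2 * β) - 2 * x / (1 + β) - (1 - x)
      = (1 - β) * (1 + β - 2 * β * x) / (2 * β * (1 + β)) := by
    field_simp; ring
  rw [e]
  apply div_nonneg (mul_nonneg (by linarith) (by nlinarith)) (by positivity)

lemma driftProfile_nonneg (hβ : 0 < β) (hβ1 : β ≤ 1) {x : ℝ} (hx : x ≤ 1) :
    0 ≤ driftProfile β x := by
  refine le_trans ?_ (le_max_right _ _)
  have : 0 ≤ (1 + β) / (2 * β) := by positivity
  exact mul_nonneg (div_nonneg (by linarith) (by linarith)) (by linarith)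

lemma stopLossBound_add_one {c : ℝ} (hc : 0 ≤ c) :
    stopLossBound β (c + 1) = (1 - β) / (1 + β) * stopLossBound β c := by
  simp only [stopLossBound, Nat.floor_add_one hc, Nat.cast_add, Nat.cast_one, pow_succ]
  ring_nf

lemma stopLossBound_of_lt_one {c : ℝ} (hc : c < 1) : stopLossBound β c = driftProfile β c := by
  simp [stopLossBound, Nat.floor_eq_zero.mpr hc]

lemma max_one_sub_le_stopLossBound (hβ : 0 < β) (hβ1 : β ≤ 1) (c : ℝ) :
    max (1 - c) 0 ≤ stopLossBound β c := by
  rcases lt_or_ge c 1 with hc1 | hc1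
  · rw [stopLossBound_of_lt_one hc1]
    exact max_le (one_sub_le_driftProfile hβ hβ1 hc1.le) (driftProfile_nonneg hβ hβ1 hc1.le)
  · rw [max_eq_right (by linarith)]
    have hr : 0 ≤ (1 - β) / (1 + β) := div_nonneg (by linarith) (by linarith)
    exact mul_nonneg (pow_nonneg hr _)
      (driftProfile_nonneg hβ hβ1 (by linarith [Nat.sub_one_lt_floor c]))

lemma stopLossBound_harmonic (hβ : 0 < β) {c : ℝ} (hc : 1 ≤ c) :
    (1 + β) / 2 * stopLossBound β (c + 1) + (1 - β) / 2 * stopLossBound β (c - 1)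
      = stopLossBound β c := by
  obtain ⟨b, rfl⟩ : ∃ b, c = b + 1 := ⟨c - 1, by ring⟩
  have hb : 0 ≤ b := by linarith
  rw [stopLossBound_add_one (by linarith), stopLossBound_add_one hb, add_sub_cancel_right]
  field_simp
  ring

lemma driftProfile_supersolution (hβ : 0 < β) (hβ1 : β ≤ 1) {x y π₀ π₁ : ℝ} (hx : x < 1)
    (hy : y ≤ (1 - β) / (1 + β) * driftProfile β x) (h₁₀ : π₁ ≤ π₀)
    (h₀ : π₀ ≤ (1 + β) / (2 * β)) (h₁ : π₁ ≤ (1 - β) / (1 + β) * ((1 + β) / (2 * β))) :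
    (1 + β) / 2 * y + (1 - β) / 2 * (π₀ - (x - 1)) + (1 + β) / 2 * (1 - x) * (1 - (π₀ - π₁))
      ≤ driftProfile β x := by
  have hy' : (1 + β) / 2 * y ≤ (1 - β) / 2 * driftProfile β x := by
    calc (1 + β) / 2 * y ≤ (1 + β) / 2 * ((1 - β) / (1 + β) * driftProfile β x) :=
          mul_le_mul_of_nonneg_left hy (by linarith)
      _ = (1 - β) / 2 * driftProfile β x := by field_simp
  have hL₁ := le_max_left ((1 + β) / (2 * β) - 2 * x / (1 + β))
    ((1 - β) / (1 + β) * ((1 + β) / (2 * β) + 1 - x))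
  have hL₂ := le_max_right ((1 + β) / (2 * β) - 2 * x / (1 + β))
    ((1 - β) / (1 + β) * ((1 + β) / (2 * β) + 1 - x))
  rw [← driftProfile] at hL₁ hL₂
  rcases le_total ((1 - β) / 2) ((1 + β) / 2 * (1 - x)) with hκ | hκ
  · have h := mul_le_mul_of_nonpos_left h₁₀ (sub_nonpos.mpr hκ)
    have h₁' := mul_le_mul_of_nonneg_left h₁ (by linarith : 0 ≤ (1 - β) / 2)
    have hL := mul_le_mul_of_nonneg_left hL₁ (by linarith : 0 ≤ (1 + β) / 2)
    have e : (1 + β) / 2 * ((1 + β) / (2 * β) - 2 * x / (1 + β))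
        = 1 - x + (1 - β) / 2 * ((1 - β) / (1 + β) * ((1 + β) / (2 * β))) := by
      field_simp; ring
    linarith
  · have h := mul_le_mul_of_nonneg_left h₀ (sub_nonneg.mpr hκ)
    have h₁' := mul_le_mul_of_nonneg_left h₁ (by nlinarith : 0 ≤ (1 + β) / 2 * (1 - x))
    have hL := mul_le_mul_of_nonneg_left hL₂ (by linarith : 0 ≤ (1 + β) / 2)
    have e : (1 + β) / 2 * ((1 - β) / (1 + β) * ((1 + β) / (2 * β) + 1 - x))
        = 1 - x + ((1 - β) / 2 - (1 + β) / 2 * (1 - x)) * ((1 + β) / (2 * β))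
          + (1 + β) / 2 * (1 - x) * ((1 - β) / (1 + β) * ((1 + β) / (2 * β))) := by
      field_simp; ring
    linarith
end DriftProfile

section ReflectedDrift
variable {Ω : Type*} {m0 : MeasurableSpace Ω} {μ : Measure Ω} {X : Ω → ℝ}

noncomputable def stopLoss (μ : Measure Ω) (X : Ω → ℝ) (c : ℝ) : ℝ :=
  ∫ ω, max (X ω - c) 0 ∂μ

lemma stopLoss_le_of_ae_le [IsProbabilityMeasure μ] {b : ℝ} (h : ∀ᵐ ω ∂μ, X ω ≤ b) (c : ℝ) :
    stopLoss μ X c ≤ max (b - c) 0 := by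
  calc stopLoss μ X c ≤ ∫ _, max (b - c) 0 ∂μ :=
        integral_mono_of_nonneg (.of_forall fun _ => le_max_right _ _) (integrable_const _)
          (h.mono fun ω hω => max_le_max (by linarith) le_rfl)
    _ = max (b - c) 0 := by simp

lemma stopLoss_antitone [IsFiniteMeasure μ] (hX : Integrable X μ) : Antitone (stopLoss μ X) :=
  fun _ _ hcd => integral_mono (by fun_prop) (by fun_prop)
    fun ω => max_le_max (by linarith) le_rfl

lemma stopLoss_of_nonpos [IsProbabilityMeasure μ] (hX : Integrable X μ) (hX₀ : ∀ ω, 0 ≤ X ω)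
    {c : ℝ} (hc : c ≤ 0) : stopLoss μ X c = ∫ ω, X ω ∂μ - c := by
  have e : (fun ω => max (X ω - c) 0) = fun ω => X ω - c :=
    funext fun ω => max_eq_left (by linarith [hX₀ ω])
  rw [stopLoss, e, integral_sub hX (integrable_const c)]
  simp

lemma integral_mul_condExp {m : MeasurableSpace Ω} (hm : m ≤ m0)
    [SigmaFinite (μ.trim hm)] {f g : Ω → ℝ} (hf : StronglyMeasurable[m] f)
    (hfg : Integrable (f * g) μ) (hg : Integrable g μ) :
    ∫ ω, f ω * μ[g | m] ω ∂μ = ∫ ω, f ω * g ω ∂μ :=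
  (integral_congr_ae (condExp_mul_of_stronglyMeasurable_left hf hfg hg)).symm.trans
    (integral_condExp hm)

lemma condExp_div_const {m : MeasurableSpace Ω} (f : Ω → ℝ) (c : ℝ) :
    μ[fun ω => f ω / c | m] =ᵐ[μ] fun ω => μ[f | m] ω / c := by
  simpa [div_eq_inv_mul, Pi.smul_def] using condExp_smul (μ := μ) c⁻¹ f m

lemma integrable_of_bounded_increments [IsFiniteMeasure μ] {Γ : ℕ → Ω → ℝ} {K : ℝ}
    (hΓ : ∀ t, AEStronglyMeasurable (Γ t) μ) (h₀ : Integrable (Γ 0) μ)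
    (hbdd : ∀ t, ∀ᵐ ω ∂μ, |Γ (t + 1) ω - Γ t ω| ≤ K) (t : ℕ) : Integrable (Γ t) μ := by
  induction t with
  | zero => exact h₀
  | succ t ih =>
    have hinc : Integrable (fun ω => Γ (t + 1) ω - Γ t ω) μ :=
      .of_bound ((hΓ (t + 1)).sub (hΓ t)) K (hbdd t)
    exact (ih.add hinc).congr (.of_forall fun ω => add_sub_cancel (Γ t ω) _)

/- `(X' - c)⁺` lies below the chord of `(· - c)⁺` over `[X - 1, X + 1]`, which is affine in the
increment `Δ`; its `m`-measurable slope lets conditioning replace `Δ` by `μ[Δ | m]`. -/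
lemma stopLoss_succ_le [IsProbabilityMeasure μ] {m : MeasurableSpace Ω} {β : ℝ} {X' Δ : Ω → ℝ}
    (hm : m ≤ m0) (hβ : 0 ≤ β) (hX : Measurable[m] X) (hXint : Integrable X μ)
    (hX₀ : ∀ ω, 0 ≤ X ω) (hΔint : Integrable Δ μ) (hΔ : ∀ᵐ ω ∂μ, |Δ ω| ≤ 1)
    (hstep : ∀ᵐ ω ∂μ, X' ω ≤ max (X ω + Δ ω) 0)
    (hdrift : ∀ᵐ ω ∂μ, 0 < X ω → μ[Δ | m] ω ≤ -β) {c : ℝ} (hc : 0 ≤ c) :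
    stopLoss μ X' c ≤ (1 + β) / 2 * stopLoss μ X (c + 1) + (1 - β) / 2 * stopLoss μ X (c - 1)
      + (1 + β) / 2 * max (1 - c) 0 * (1 - (∫ ω, X ω ∂μ - stopLoss μ X 1)) := by
  set A : Ω → ℝ := fun ω => max (X ω - (c + 1)) 0
  set U : Ω → ℝ := fun ω => max (X ω - (c - 1)) 0
  set H : Ω → ℝ := fun ω => (U ω - A ω) / 2
  have hH : StronglyMeasurable[m] H :=
    (((hX.sub_const _).max measurable_const).sub
      ((hX.sub_const _).max measurable_const)).div_const 2 |>.stronglyMeasurable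
  have hHbdd : ∀ ω, ‖H ω‖ ≤ 1 := fun ω => by
    simp only [H, U, A, Real.norm_eq_abs, abs_le]
    constructor
    · linarith [max_le_max (by linarith : X ω - (c + 1) ≤ X ω - (c - 1)) (le_refl (0:ℝ))]
    · have : max (X ω - (c - 1)) 0 ≤ max (X ω - (c + 1)) 0 + 2 := by
        rcases le_total (X ω - (c - 1)) 0 with h | h
        · rw [max_eq_right h]; linarith [le_max_right (X ω - (c + 1)) 0]
        · rw [max_eq_left h]; linarith [le_max_left (X ω - (c + 1)) 0]
      linarith
  have hAint : Integrable A μ := by fun_prop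
  have hUint : Integrable U μ := by fun_prop
  have hHint : Integrable H μ := (hUint.sub hAint).div_const 2
  have hHmul : ∀ {g : Ω → ℝ}, Integrable g μ → Integrable (fun ω => H ω * g ω) μ := fun hg =>
    hg.bdd_mul (hH.mono hm).aestronglyMeasurable (.of_forall hHbdd)
  have hcond : ∀ᵐ ω ∂μ, μ[Δ | m] ω ≤ 1 :=
    (ae_bdd_abs_condExp_of_ae_bdd_abs hΔ).mono fun ω h => (abs_le.mp h).2
  calc stopLoss μ X' c ≤ ∫ ω, A ω + H ω * (1 + Δ ω) ∂μ := by
        refine integral_mono_of_nonneg (.of_forall fun _ => le_max_right _ _)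
          (hAint.add (hHmul ((integrable_const 1).add hΔint))) ?_
        filter_upwards [hΔ, hstep] with ω hΔω hω
        exact max_sub_le_chord hc hΔω hω
    _ = ∫ ω, A ω + H ω * (1 + μ[Δ | m] ω) ∂μ := by
        have hsplit : ∀ {g : Ω → ℝ}, Integrable g μ →
            ∫ ω, A ω + H ω * (1 + g ω) ∂μ = ∫ ω, A ω + H ω ∂μ + ∫ ω, H ω * g ω ∂μ := fun hg => by
          rw [← integral_add (f := fun ω => A ω + H ω) (hAint.add hHint) (hHmul hg)]
          simp only [mul_add, mul_one, add_assoc]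
        rw [hsplit hΔint, hsplit integrable_condExp, integral_mul_condExp hm hH (hHmul hΔint) hΔint]
    _ ≤ ∫ ω, (1 + β) / 2 * A ω + (1 - β) / 2 * U ω
          + (1 + β) / 2 * max (1 - c) 0 * (1 - (X ω - max (X ω - 1) 0)) ∂μ := by
        refine integral_mono_ae (hAint.add (hHmul ((integrable_const 1).add integrable_condExp)))
          (by fun_prop) ?_
        filter_upwards [hcond, hdrift] with ω h₁ h₂
        exact chord_le_of_drift hβ (hX₀ ω) hc h₁ h₂
    _ = _ := by
        rw [integral_add (by fun_prop) (by fun_prop), integral_add (by fun_prop) (by fun_prop),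
          integral_const_mul, integral_const_mul, integral_const_mul,
          integral_sub (integrable_const 1) (by fun_prop), integral_sub hXint (by fun_prop)]
        simp [stopLoss, A, U]

theorem stopLoss_le_stopLossBound [IsProbabilityMeasure μ] {ℱ : Filtration ℕ m0} {β : ℝ}
    {Y δ : ℕ → Ω → ℝ} (hβ : 0 < β) (hβ1 : β ≤ 1) (hY : Adapted ℱ Y)
    (hYint : ∀ s, Integrable (Y s) μ) (hY₀ : ∀ s ω, 0 ≤ Y s ω) (hYinit : ∀ᵐ ω ∂μ, Y 0 ω ≤ 1)
    (hδint : ∀ s, Integrable (δ s) μ) (hδ : ∀ s, ∀ᵐ ω ∂μ, |δ s ω| ≤ 1)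
    (hstep : ∀ s, ∀ᵐ ω ∂μ, Y (s + 1) ω ≤ max (Y s ω + δ s ω) 0)
    (hdrift : ∀ s, ∀ᵐ ω ∂μ, 0 < Y s ω → μ[δ s | ℱ s] ω ≤ -β) (s : ℕ) {c : ℝ} (hc : 0 ≤ c) :
    stopLoss μ (Y s) c ≤ stopLossBound β c := by
  induction s generalizing c with
  | zero => exact (stopLoss_le_of_ae_le hYinit c).trans (max_one_sub_le_stopLossBound hβ hβ1 c)
  | succ s ih =>
    have hsucc := stopLoss_succ_le (ℱ.le s) hβ.le (hY s) (hYint s) (hY₀ s) (hδint s) (hδ s)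
      (hstep s) (hdrift s) hc
    rcases le_or_gt 1 c with hc1 | hc1
    · rw [max_eq_right (by linarith), mul_zero, zero_mul, add_zero] at hsucc
      rw [← stopLossBound_harmonic hβ hc1]
      refine hsucc.trans (add_le_add ?_ ?_)
      · exact mul_le_mul_of_nonneg_left (ih (by linarith)) (by linarith)
      · exact mul_le_mul_of_nonneg_left (ih (by linarith)) (by linarith)
    · have hπ₀ := ih le_rfl
      have hπ₁ := ih zero_le_one
      have hΦ₁ : stopLossBound β 1 = (1 - β) / (1 + β) * stopLossBound β 0 := by
        simpa using stopLossBound_add_one (β := β) le_rfl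
      rw [max_eq_left (by linarith), stopLoss_of_nonpos (c := c - 1) (hYint s) (hY₀ s)
        (by linarith)] at hsucc
      rw [stopLoss_of_nonpos (hYint s) (hY₀ s) le_rfl, sub_zero] at hπ₀
      rw [hΦ₁] at hπ₁
      rw [stopLossBound_of_lt_one zero_lt_one, driftProfile_zero hβ] at hπ₀ hπ₁
      rw [stopLossBound_of_lt_one hc1]
      refine hsucc.trans (driftProfile_supersolution hβ hβ1 hc1 ?_ ?_ hπ₀ hπ₁)
      · rw [← stopLossBound_of_lt_one hc1, ← stopLossBound_add_one hc]
        exact ih (by linarith)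
      · exact (stopLoss_antitone (hYint s) zero_le_one).trans_eq
          (by rw [stopLoss_of_nonpos (hYint s) (hY₀ s) le_rfl, sub_zero])

theorem integral_le_of_drift [IsProbabilityMeasure μ] {ℱ : Filtration ℕ m0} {Γ : ℕ → Ω → ℝ}
    {K η a : ℝ} (hΓ : Adapted ℱ Γ) (hint : ∀ t, Integrable (Γ t) μ) (hK : 0 < K) (hη : 0 < η)
    (hηK : η ≤ K) (hbdd : ∀ t, ∀ᵐ ω ∂μ, |Γ (t + 1) ω - Γ t ω| ≤ K)
    (hdrift : ∀ t, ∀ᵐ ω ∂μ, a < Γ t ω → μ[fun ω => Γ (t + 1) ω - Γ t ω | ℱ t] ω ≤ -η)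
    (hinit : ∀ᵐ ω ∂μ, Γ 0 ω ≤ a + K) (t : ℕ) :
    ∫ ω, Γ t ω ∂μ ≤ a + K * (K + η) / (2 * η) := by
  have hβ : 0 < η / K := div_pos hη hK
  have hYint : ∀ s, Integrable (fun ω => max ((Γ s ω - a) / K) 0) μ := fun s => by fun_prop
  have hY := stopLoss_le_stopLossBound (Y := fun s ω => max ((Γ s ω - a) / K) 0)
    (δ := fun s ω => (Γ (s + 1) ω - Γ s ω) / K) hβ ((div_le_one hK).mpr hηK)
    (fun s => (((hΓ s).sub_const a).div_const K).max measurable_const) hYint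
    (fun s ω => le_max_right _ _)
    (hinit.mono fun ω h => max_le ((div_le_one hK).mpr (by linarith)) zero_le_one)
    (fun s => ((hint (s + 1)).sub (hint s)).div_const K)
    (fun s => (hbdd s).mono fun ω h => by rwa [abs_div, abs_of_pos hK, div_le_one hK])
    (fun s => .of_forall fun ω => max_le_max (by
      rw [show Γ (s + 1) ω - a = (Γ s ω - a) + (Γ (s + 1) ω - Γ s ω) by ring, add_div]
      exact add_le_add_left (le_max_left _ _) _) le_rfl)
    (fun s => by
      filter_upwards [hdrift s, condExp_div_const (μ := μ) (m := ℱ s)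
        (fun ω => Γ (s + 1) ω - Γ s ω) K] with ω hω he hpos
      rw [he, ← neg_div]
      exact div_le_div_of_nonneg_right (hω (sub_pos.mp ((div_pos_iff_of_pos_right hK).mp
        ((lt_max_iff.mp hpos).resolve_right (lt_irrefl 0))))) hK.le)
    t le_rfl
  rw [stopLoss_of_nonpos (hYint t) (fun ω => le_max_right _ _) le_rfl, sub_zero,
    stopLossBound_of_lt_one zero_lt_one, driftProfile_zero hβ] at hY
  calc ∫ ω, Γ t ω ∂μ ≤ ∫ ω, a + K * max ((Γ t ω - a) / K) 0 ∂μ :=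
        integral_mono (hint t) (by fun_prop) fun ω => by
          have := mul_le_mul_of_nonneg_left (le_max_left ((Γ t ω - a) / K) 0) hK.le
          rw [mul_div_cancel₀ _ hK.ne'] at this
          linarith
    _ = a + K * ∫ ω, max ((Γ t ω - a) / K) 0 ∂μ := by
        rw [integral_add (integrable_const a) ((hYint t).const_mul K), integral_const_mul]
        simp
    _ ≤ a + K * ((1 + η / K) / (2 * (η / K))) := by gcongr
    _ = a + K * (K + η) / (2 * η) := by field_simp

end ReflectedDrift

theorem stmt_11_general {Ω : Type*} {m0 : MeasurableSpace Ω} (μ : Measure Ω) [IsProbabilityMeasure μ]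
    (ℱ : Filtration ℕ m0) (Γ : ℕ → Ω → ℝ) (hadapted : Adapted ℱ Γ)
    (K η D : ℝ) (hK : 0 < K) (hη : 0 < η) (hηK : η ≤ K)
    (hΓ0int : Integrable (Γ 0) μ)
    (hbdd : ∀ t : ℕ, ∀ᵐ ω ∂μ, |Γ (t + 1) ω - Γ t ω| ≤ K)
    (hdrift : ∀ t : ℕ, ∀ᵐ ω ∂μ, D ≤ Γ t ω →
      (μ[fun ω => Γ (t + 1) ω - Γ t ω | ℱ t]) ω ≤ -η)
    (hinit : ∀ᵐ ω ∂μ, Γ 0 ω ≤ K + D)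
    (t : ℕ) :
    ∫ ω, Γ t ω ∂μ ≤ K * (1 + (⌈D / K⌉ : ℝ)) + K * ((K - η) / (2 * η)) := by
  have hint := integrable_of_bounded_increments
    (fun t => ((hadapted t).mono (ℱ.le t) le_rfl).aestronglyMeasurable) hΓ0int hbdd
  have hbound := integral_le_of_drift hadapted hint hK hη hηK hbdd
    (fun t => (hdrift t).mono fun ω h hlt => h hlt.le) (hinit.mono fun ω h => by linarith) t
  have hceil : D ≤ K * ⌈D / K⌉ := (div_le_iff₀' hK).mp (Int.le_ceil _)
  have e : K * (1 + (⌈D / K⌉ : ℝ)) + K * ((K - η) / (2 * η))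
      = K * ⌈D / K⌉ + K * (K + η) / (2 * η) := by
    field_simp; ring
  linarith

/-- Drift lemma (Wei et al. 2023, Lemma 5): an adapted process with bounded increments and
negative conditional drift above level `D` has a uniform-in-time bound on its expectation. -/
theorem stmt_11 {Ω : Type*} {m0 : MeasurableSpace Ω} (μ : Measure Ω) [IsProbabilityMeasure μ]
    (ℱ : Filtration ℕ m0) (Γ : ℕ → Ω → ℝ) (hadapted : Adapted ℱ Γ)
    (K η D : ℝ) (hK : 0 < K) (hη : 0 < η) (hD : 0 < D) (hηK : η ≤ K)
    (hΓ0int : Integrable (Γ 0) μ)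
    (hbdd : ∀ t : ℕ, ∀ᵐ ω ∂μ, |Γ (t + 1) ω - Γ t ω| ≤ K)
    (hdrift : ∀ t : ℕ, ∀ᵐ ω ∂μ, D ≤ Γ t ω →
      (μ[fun ω => Γ (t + 1) ω - Γ t ω | ℱ t]) ω ≤ -η)
    (hinit : ∀ᵐ ω ∂μ, Γ 0 ω ≤ K + D)
    (t : ℕ) :
    ∫ ω, Γ t ω ∂μ ≤ K * (1 + (⌈D / K⌉ : ℝ)) + K * ((K - η) / (2 * η)) :=
  stmt_11_general μ ℱ Γ hadapted K η D hK hη hηK hΓ0int hbdd hdrift hinit t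
end

section
/- Let (Ψ(t))_{t ≥ 1} and (Z(t))_{t ≥ 1} be adapted processes with respect to a filtration (F_t), with Ψ(1) = 0 and Z(t) ≥ 0 for all t. Suppose there exist positive constants κ, δ, B with δ ≤ 2κ such that: (i) |Ψ(t+1) − Ψ(t)| ≤ κ almost surely; (ii) E[Ψ(t+1) − Ψ(t) | F_t] ≤ −δ + Z(t) on the event {Ψ(t) ≥ B}; (iii) Z(t) ≤ κ almost surely. Then for every t ≥ 1, E[Ψ(t)] ≤ 4κ + B + 2κ²/δ + E[∑_{τ=1}^{t−1} Z(τ)]. -/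
/-
Write `Γ t = Ψ t - ∑_{1 ≤ τ < t} Z τ`. Its increments lie in `[-2κ, κ]` and, on `{B ≤ Γ t}` (a
subset of `{B ≤ Ψ t}` because `Z ≥ 0`), have conditional mean at most `-δ`. Pathwise,
`Γ t ≤ B + κ + R t` for the walk `R` reflected at `0` whose increment is that of `Γ` while
`B ≤ Γ`, and `-δ` otherwise.

Among all such reflected walks, the one moving `+κ` or `-2κ` with mean `-δ` is extremal: for a
convex nondecreasing `g`, the chord of `g` over `[r - 2κ, r + κ]` dominates `g` on that interval
and its expectation only involves the conditional mean of the increment. So `E[R t]` is at most the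
mean `F t 0 = walkMean κ δ t 0` of this two-point walk after `t` steps from `0`. The quadratic
Lyapunov function gives `2δ ∑_{u < N} F u 0 ≤ N (2κ² + κδ)`, and `u ↦ F u 0` is nondecreasing, so
averaging over `u < 2t` gives `F t 0 ≤ 2κ²/δ + κ`.
-/

open MeasureTheory Set

/-- The transition operator of the walk on `[0, ∞)` that moves up by `κ` with probability
`(2κ - δ)/(3κ)` and down by `2κ` with probability `(κ + δ)/(3κ)` (drift `-δ`), then is reflected
at `0`. It only sees `max v 0`. -/
noncomputable def walkStep (κ δ : ℝ) : (ℝ → ℝ) →ₗ[ℝ] (ℝ → ℝ) where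
  toFun g v := ((2 * κ - δ) * g (max v 0 + κ) + (κ + δ) * g (max (v - 2 * κ) 0)) / (3 * κ)
  map_add' f g := by ext v; simp only [Pi.add_apply]; ring
  map_smul' c g := by ext v; simp only [Pi.smul_apply, smul_eq_mul, RingHom.id_apply]; ring

/-- Expected position after `u` steps of the walk of `walkStep` started at `max v 0`. -/
noncomputable def walkMean (κ δ : ℝ) (u : ℕ) : ℝ → ℝ := (walkStep κ δ ^ u) fun v => max v 0

variable {κ δ : ℝ}

lemma ConvexOn.comp_univ_of_monotone {E : Type*} [AddCommMonoid E] [Module ℝ E] {f : E → ℝ}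
    {g : ℝ → ℝ} (hg : ConvexOn ℝ univ g) (hgm : Monotone g) (hf : ConvexOn ℝ univ f) :
    ConvexOn ℝ univ (g ∘ f) :=
  ⟨convex_univ, fun _ _ _ _ _ _ ha hb hab =>
    (hgm (hf.2 trivial trivial ha hb hab)).trans (hg.2 trivial trivial ha hb hab)⟩

lemma convexOn_max_zero : ConvexOn ℝ univ fun v : ℝ => max v 0 :=
  (convexOn_id convex_univ).sup (convexOn_const 0 convex_univ)

lemma ConvexOn.apply_max_add_le {g : ℝ → ℝ} (hgc : ConvexOn ℝ univ g) (hg : Monotone g)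
    (hκ : 0 < κ) {r x : ℝ} (hr : 0 ≤ r) (hx : -(2 * κ) ≤ x) (hx' : x ≤ κ) :
    g (max (r + x) 0)
      ≤ ((κ - x) * g (max (r - 2 * κ) 0) + (x + 2 * κ) * g (r + κ)) / (3 * κ) := by
  set a := (κ - x) / (3 * κ)
  set b := (x + 2 * κ) / (3 * κ)
  have ha : 0 ≤ a := div_nonneg (by linarith) (by linarith)
  have hb : 0 ≤ b := div_nonneg (by linarith) (by linarith)
  have hab : a + b = 1 := by simp only [a, b]; field_simp; ring
  have hmax : max (r + x) 0 ≤ a * max (r - 2 * κ) 0 + b * (r + κ) := by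
    have hdown : a * (r - 2 * κ) ≤ a * max (r - 2 * κ) 0 :=
      mul_le_mul_of_nonneg_left (le_max_left _ _) ha
    have hcombo : r + x = a * (r - 2 * κ) + b * (r + κ) := by simp only [a, b]; field_simp; ring
    refine max_le (by linarith) ?_
    have := mul_nonneg hb (by linarith : 0 ≤ r + κ)
    have := mul_nonneg ha (le_max_right (r - 2 * κ) 0)
    linarith
  calc g (max (r + x) 0) ≤ g (a • max (r - 2 * κ) 0 + b • (r + κ)) := hg hmax
    _ ≤ a • g (max (r - 2 * κ) 0) + b • g (r + κ) := hgc.2 (mem_univ _) (mem_univ _) ha hb hab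
    _ = _ := by simp only [a, b, smul_eq_mul]; field_simp

lemma Monotone.integrable_comp {Ω : Type*} {m0 : MeasurableSpace Ω} {μ : Measure Ω}
    [IsFiniteMeasure μ] {g : ℝ → ℝ} (hg : Monotone g) {f : Ω → ℝ} (hf : Measurable f) {a b : ℝ}
    (hfa : ∀ ω, a ≤ f ω) (hfb : ∀ ω, f ω ≤ b) : Integrable (fun ω => g (f ω)) μ :=
  .of_mem_Icc (g a) (g b) (hg.measurable.comp hf).aemeasurable
    (ae_of_all _ fun ω => ⟨hg (hfa ω), hg (hfb ω)⟩)

lemma integrable_of_abs_sub_le {Ω : Type*} {m0 : MeasurableSpace Ω} {μ : Measure Ω}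
    [IsFiniteMeasure μ] {f : ℕ → Ω → ℝ} {c : ℝ} (hf : ∀ s, AEStronglyMeasurable (f s) μ)
    (hinc : ∀ s, ∀ᵐ ω ∂μ, |f (s + 1) ω - f s ω| ≤ c) {n : ℕ} (hn : Integrable (f n) μ) {t : ℕ}
    (ht : n ≤ t) : Integrable (f t) μ := by
  induction t, ht using Nat.le_induction with
  | base => exact hn
  | succ s _ ih =>
    have hd : Integrable (f (s + 1) - f s) μ := .of_bound ((hf (s + 1)).sub (hf s)) c (hinc s)
    exact (ih.add hd).congr (ae_of_all _ fun ω => by simp)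

lemma integral_mul_le_of_condExp_le {Ω : Type*} {m m0 : MeasurableSpace Ω} {μ : Measure Ω}
    [IsFiniteMeasure μ] (hm : m ≤ m0) {h X : Ω → ℝ} {C c : ℝ} (hh : StronglyMeasurable[m] h)
    (hh0 : ∀ ω, 0 ≤ h ω) (hhC : ∀ ω, h ω ≤ C) (hX : Integrable X μ)
    (hXc : μ[X|m] ≤ᵐ[μ] fun _ => c) :
    ∫ ω, h ω * X ω ∂μ ≤ c * ∫ ω, h ω ∂μ := by
  have hhm : AEStronglyMeasurable h μ := (hh.mono hm).aestronglyMeasurable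
  have hhC' : ∀ᵐ ω ∂μ, ‖h ω‖ ≤ C :=
    ae_of_all _ fun ω => by rw [Real.norm_eq_abs, abs_of_nonneg (hh0 ω)]; exact hhC ω
  have hhX : Integrable (h * X) μ := hX.bdd_mul hhm hhC'
  calc ∫ ω, h ω * X ω ∂μ = ∫ ω, μ[h * X|m] ω ∂μ := (integral_condExp hm).symm
    _ = ∫ ω, h ω * μ[X|m] ω ∂μ :=
      integral_congr_ae (condExp_mul_of_stronglyMeasurable_left hh hhX hX)
    _ ≤ ∫ ω, h ω * c ∂μ :=
      integral_mono_ae (integrable_condExp.bdd_mul hhm hhC')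
        ((integrable_const c).bdd_mul hhm hhC')
        (hXc.mono fun ω hω => mul_le_mul_of_nonneg_left hω (hh0 ω))
    _ = c * ∫ ω, h ω ∂μ := by rw [integral_mul_const, mul_comm]

lemma walkStep_apply (g : ℝ → ℝ) (v : ℝ) :
    walkStep κ δ g v
      = ((2 * κ - δ) * g (max v 0 + κ) + (κ + δ) * g (max (v - 2 * κ) 0)) / (3 * κ) := rfl

lemma walkStep_const (hκ : 0 < κ) (c : ℝ) : walkStep κ δ (fun _ => c) = fun _ => c := by
  ext v
  rw [walkStep_apply]
  field_simp
  ring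

lemma walkStep_pow_const (hκ : 0 < κ) (u : ℕ) (c : ℝ) :
    (walkStep κ δ ^ u) (fun _ => c) = fun _ => c := by
  induction u with
  | zero => rfl
  | succ u ih => rw [pow_succ', Module.End.mul_apply, ih, walkStep_const hκ]

lemma walkStep_mono (hκ : 0 < κ) (hδ : 0 ≤ δ) (hδκ : δ ≤ 2 * κ) : Monotone (walkStep κ δ) := by
  intro f g hfg v
  have : 0 ≤ 2 * κ - δ := by linarith
  simp only [walkStep_apply]
  gcongr
  exacts [hfg _, hfg _]

lemma walkStep_pow_mono (hκ : 0 < κ) (hδ : 0 ≤ δ) (hδκ : δ ≤ 2 * κ) (u : ℕ) :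
    Monotone (walkStep κ δ ^ u) := by
  induction u with
  | zero => exact monotone_id
  | succ u ih => rw [pow_succ']; exact (walkStep_mono hκ hδ hδκ).comp ih

lemma walkStep_pow_nonneg (hκ : 0 < κ) (hδ : 0 ≤ δ) (hδκ : δ ≤ 2 * κ) (u : ℕ) {g : ℝ → ℝ}
    (hg : 0 ≤ g) : 0 ≤ (walkStep κ δ ^ u) g := by
  simpa only [map_zero] using walkStep_pow_mono hκ hδ hδκ u hg

lemma walkStep_sq_le (hκ : 0 < κ) (hδ : 0 ≤ δ) (v : ℝ) :
    walkStep κ δ (fun w => max w 0 ^ 2) v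
      ≤ max v 0 ^ 2 - 2 * δ * max v 0 + (2 * κ ^ 2 + κ * δ) := by
  have hw : 0 ≤ max v 0 := le_max_right v 0
  have hdown : max (max (v - 2 * κ) 0) 0 ^ 2 ≤ (max v 0 - 2 * κ) ^ 2 := by
    rw [max_eq_left (le_max_right _ _)]
    rcases le_total v (2 * κ) with h | h
    · rw [max_eq_right (by linarith)]; simpa using sq_nonneg _
    · rw [max_eq_left (by linarith), max_eq_left (by linarith : 0 ≤ v)]
  rw [walkStep_apply, max_eq_left (by linarith : 0 ≤ max v 0 + κ), div_le_iff₀ (by positivity)]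
  have : 0 ≤ κ + δ := by linarith
  nlinarith [mul_le_mul_of_nonneg_left hdown this]

lemma monotone_walkStep (hκ : 0 < κ) (hδ : 0 ≤ δ) (hδκ : δ ≤ 2 * κ) {g : ℝ → ℝ}
    (hg : Monotone g) : Monotone (walkStep κ δ g) := by
  intro v w hvw
  have : 0 ≤ 2 * κ - δ := by linarith
  simp only [walkStep_apply]
  gcongr
  exacts [hg (by gcongr), hg (by gcongr)]

lemma convexOn_walkStep (hκ : 0 < κ) (hδ : 0 ≤ δ) (hδκ : δ ≤ 2 * κ) {g : ℝ → ℝ}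
    (hg : Monotone g) (hgc : ConvexOn ℝ univ g) : ConvexOn ℝ univ (walkStep κ δ g) := by
  have hup : ConvexOn ℝ univ (g ∘ fun v => max v 0 + κ) :=
    hgc.comp_univ_of_monotone hg (convexOn_max_zero.add_const κ)
  have hdown : ConvexOn ℝ univ (g ∘ fun v => max (v - 2 * κ) 0) := by
    refine hgc.comp_univ_of_monotone hg ?_
    simpa only [sub_eq_add_neg, preimage_univ, Function.comp_def] using
      convexOn_max_zero.translate_left (-(2 * κ))
  refine ⟨convex_univ, fun x _ y _ a b ha hb hab => ?_⟩
  have h1 := hup.2 (mem_univ x) (mem_univ y) ha hb hab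
  have h2 := hdown.2 (mem_univ x) (mem_univ y) ha hb hab
  simp only [walkStep_apply, smul_eq_mul, Function.comp] at h1 h2 ⊢
  have hp : 0 ≤ 2 * κ - δ := by linarith
  have hq : 0 ≤ κ + δ := by linarith
  rw [mul_div_assoc', mul_div_assoc', ← add_div, div_le_div_iff_of_pos_right (by positivity)]
  linear_combination (2 * κ - δ) * h1 + (κ + δ) * h2

lemma walkMean_zero : walkMean κ δ 0 = fun v => max v 0 := rfl

lemma walkMean_succ (u : ℕ) : walkMean κ δ (u + 1) = walkStep κ δ (walkMean κ δ u) := by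
  rw [walkMean, pow_succ', Module.End.mul_apply, walkMean]

lemma monotone_walkMean (hκ : 0 < κ) (hδ : 0 ≤ δ) (hδκ : δ ≤ 2 * κ) (u : ℕ) :
    Monotone (walkMean κ δ u) := by
  induction u with
  | zero => exact monotone_id.max monotone_const
  | succ u ih => rw [walkMean_succ]; exact monotone_walkStep hκ hδ hδκ ih

lemma convexOn_walkMean (hκ : 0 < κ) (hδ : 0 ≤ δ) (hδκ : δ ≤ 2 * κ) (u : ℕ) :
    ConvexOn ℝ univ (walkMean κ δ u) := by
  induction u with
  | zero => exact convexOn_max_zero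
  | succ u ih =>
    rw [walkMean_succ]; exact convexOn_walkStep hκ hδ hδκ (monotone_walkMean hκ hδ hδκ u) ih

lemma walkMean_nonneg (hκ : 0 < κ) (hδ : 0 ≤ δ) (hδκ : δ ≤ 2 * κ) (u : ℕ) :
    0 ≤ walkMean κ δ u :=
  walkStep_pow_nonneg hκ hδ hδκ u fun v => le_max_right v 0

lemma monotone_walkMean_apply_zero (hκ : 0 < κ) (hδ : 0 ≤ δ) (hδκ : δ ≤ 2 * κ) :
    Monotone fun u => walkMean κ δ u 0 := by
  refine monotone_nat_of_le_succ fun u => ?_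
  have hκu := monotone_walkMean hκ hδ hδκ u hκ.le
  rw [walkMean_succ, walkStep_apply, le_div_iff₀ (by positivity), max_self, zero_add, zero_sub,
    max_eq_right (by linarith : -(2 * κ) ≤ 0)]
  nlinarith

lemma mul_walkMean_le (hκ : 0 < κ) (hδ : 0 ≤ δ) (hδκ : δ ≤ 2 * κ) (u : ℕ) (v : ℝ) :
    2 * δ * walkMean κ δ u v
      ≤ (walkStep κ δ ^ u) (fun w => max w 0 ^ 2) v
        - (walkStep κ δ ^ (u + 1)) (fun w => max w 0 ^ 2) v + (2 * κ ^ 2 + κ * δ) := by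
  set sq : ℝ → ℝ := fun w => max w 0 ^ 2
  have hlyap : (0 : ℝ → ℝ) ≤ sq - walkStep κ δ sq + (fun _ => 2 * κ ^ 2 + κ * δ)
      - (2 * δ) • fun w => max w 0 := fun w => by
    have := walkStep_sq_le hκ hδ w
    simp only [Pi.zero_apply, Pi.sub_apply, Pi.add_apply, Pi.smul_apply, smul_eq_mul]
    linarith
  have := walkStep_pow_mono hκ hδ hδκ u hlyap v
  rw [map_zero, map_sub, map_add, map_sub, map_smul, walkStep_pow_const hκ,
    ← Module.End.mul_apply, ← pow_succ] at this
  simp only [Pi.zero_apply, Pi.sub_apply, Pi.add_apply, Pi.smul_apply, smul_eq_mul] at this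
  rw [walkMean]
  linarith

lemma sum_walkMean_apply_zero_le (hκ : 0 < κ) (hδ : 0 ≤ δ) (hδκ : δ ≤ 2 * κ) (N : ℕ) :
    2 * δ * ∑ u ∈ Finset.range N, walkMean κ δ u 0
      + (walkStep κ δ ^ N) (fun w => max w 0 ^ 2) 0 ≤ N * (2 * κ ^ 2 + κ * δ) := by
  induction N with
  | zero => simp
  | succ N ih =>
    have := mul_walkMean_le hκ hδ hδκ N 0
    rw [Finset.sum_range_succ]
    push_cast
    linarith

lemma walkMean_apply_zero_le (hκ : 0 < κ) (hδ : 0 < δ) (hδκ : δ ≤ 2 * κ) (U : ℕ) :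
    walkMean κ δ U 0 ≤ 2 * κ ^ 2 / δ + κ := by
  rcases Nat.eq_zero_or_pos U with rfl | hU
  · simp only [walkMean_zero, max_self]; positivity
  have hsum := sum_walkMean_apply_zero_le hκ hδ.le hδκ (U + U)
  have hsq : 0 ≤ (walkStep κ δ ^ (U + U)) (fun w => max w 0 ^ 2) 0 :=
    walkStep_pow_nonneg hκ hδ.le hδκ (U + U) (fun w => by positivity) 0
  have hhead : 0 ≤ ∑ u ∈ Finset.range U, walkMean κ δ u 0 :=
    Finset.sum_nonneg fun u _ => walkMean_nonneg hκ hδ.le hδκ u 0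
  have htail : U * walkMean κ δ U 0 ≤ ∑ u ∈ Finset.range U, walkMean κ δ (U + u) 0 := by
    simpa using Finset.card_nsmul_le_sum (Finset.range U) (fun u => walkMean κ δ (U + u) 0) _
      fun u _ => monotone_walkMean_apply_zero hκ hδ.le hδκ (Nat.le_add_right U u)
  rw [Finset.sum_range_add] at hsum
  have hUpos : (0 : ℝ) < U := by exact_mod_cast hU
  rw [show 2 * κ ^ 2 / δ + κ = (2 * κ ^ 2 + κ * δ) / δ by field_simp, le_div_iff₀ hδ]
  push_cast at hsum
  nlinarith

lemma ConvexOn.apply_max_add_le_walkStep {g : ℝ → ℝ} (hgc : ConvexOn ℝ univ g)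
    (hg : Monotone g) (hκ : 0 < κ) {r x : ℝ} (hr : 0 ≤ r) (hx : -(2 * κ) ≤ x) (hx' : x ≤ κ) :
    g (max (r + x) 0)
      ≤ walkStep κ δ g r + (g (r + κ) - g (max (r - 2 * κ) 0)) / (3 * κ) * (x + δ) := by
  refine (hgc.apply_max_add_le hg hκ hr hx hx').trans_eq ?_
  rw [walkStep_apply, max_eq_left hr]
  field_simp
  ring

lemma integral_max_add_le_walkStep {Ω : Type*} {m m0 : MeasurableSpace Ω} {μ : Measure Ω}
    [IsFiniteMeasure μ] (hm : m ≤ m0) (hκ : 0 < κ) (hδ : 0 ≤ δ) (hδκ : δ ≤ 2 * κ) {g : ℝ → ℝ}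
    (hg : Monotone g) (hgc : ConvexOn ℝ univ g) {r Y : Ω → ℝ} {M : ℝ}
    (hr : StronglyMeasurable[m] r) (hr0 : ∀ ω, 0 ≤ r ω) (hrM : ∀ ω, r ω ≤ M)
    (hY : StronglyMeasurable Y) (hYlo : ∀ ω, -(2 * κ) ≤ Y ω) (hYhi : ∀ ω, Y ω ≤ κ)
    (hYδ : μ[Y|m] ≤ᵐ[μ] fun _ => -δ) :
    ∫ ω, g (max (r ω + Y ω) 0) ∂μ ≤ ∫ ω, walkStep κ δ g (r ω) ∂μ := by
  set slope : Ω → ℝ := fun ω => (g (r ω + κ) - g (max (r ω - 2 * κ) 0)) / (3 * κ)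
  have hr' : Measurable r := (hr.mono hm).measurable
  have hslope_meas : StronglyMeasurable[m] slope :=
    (((hg.measurable.comp (hr.measurable.add_const _)).sub (hg.measurable.comp
      ((hr.measurable.sub_const _).max measurable_const))).div_const _).stronglyMeasurable
  have hslope0 : ∀ ω, 0 ≤ slope ω := fun ω =>
    div_nonneg (sub_nonneg.2 (hg (max_le (by linarith [hr0 ω]) (by linarith [hr0 ω]))))
      (by linarith)
  have hslopeC : ∀ ω, slope ω ≤ (g (M + κ) - g 0) / (3 * κ) := fun ω =>
    div_le_div_of_nonneg_right (sub_le_sub (hg (by linarith [hrM ω])) (hg (le_max_right _ _)))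
      (by linarith)
  have hY_int : Integrable Y μ :=
    .of_mem_Icc _ _ hY.measurable.aemeasurable (ae_of_all _ fun ω => ⟨hYlo ω, hYhi ω⟩)
  have hslope_int : Integrable slope μ :=
    .of_mem_Icc 0 _ (hslope_meas.mono hm).measurable.aemeasurable
      (ae_of_all _ fun ω => ⟨hslope0 ω, hslopeC ω⟩)
  have hslopeY_int : Integrable (fun ω => slope ω * Y ω) μ :=
    hY_int.bdd_mul (hslope_meas.mono hm).aestronglyMeasurable (ae_of_all _ fun ω => by
      rw [Real.norm_eq_abs, abs_of_nonneg (hslope0 ω)]; exact hslopeC ω)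
  have hrest_int : Integrable (fun ω => slope ω * Y ω + δ * slope ω) μ :=
    hslopeY_int.add (hslope_int.const_mul δ)
  have hstep_int : Integrable (fun ω => walkStep κ δ g (r ω)) μ :=
    (monotone_walkStep hκ hδ hδκ hg).integrable_comp hr' hr0 hrM
  have hdrift : ∫ ω, slope ω * Y ω ∂μ ≤ -δ * ∫ ω, slope ω ∂μ :=
    integral_mul_le_of_condExp_le hm hslope_meas hslope0 hslopeC hY_int hYδ
  have hlhs_int : Integrable (fun ω => g (max (r ω + Y ω) 0)) μ :=
    (hg.comp (monotone_id.max monotone_const)).integrable_comp (hr'.add hY.measurable)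
      (a := -(2 * κ)) (b := M + κ) (fun ω => by linarith [hr0 ω, hYlo ω])
      (fun ω => by linarith [hrM ω, hYhi ω])
  calc ∫ ω, g (max (r ω + Y ω) 0) ∂μ
      ≤ ∫ ω, (walkStep κ δ g (r ω) + (slope ω * Y ω + δ * slope ω)) ∂μ := by
        refine integral_mono hlhs_int (hstep_int.add hrest_int) fun ω => ?_
        have := hgc.apply_max_add_le_walkStep (δ := δ) hg hκ (hr0 ω) (hYlo ω) (hYhi ω)
        linarith
    _ ≤ ∫ ω, walkStep κ δ g (r ω) ∂μ := by
        rw [integral_add hstep_int hrest_int, integral_add hslopeY_int (hslope_int.const_mul δ),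
          integral_const_mul]
        linarith

section ReflectedWalk

variable {Ω : Type*} {m0 : MeasurableSpace Ω}

def reflectedWalk (X : ℕ → Ω → ℝ) : ℕ → Ω → ℝ
  | 0 => 0
  | s + 1 => fun ω => max (reflectedWalk X s ω + X s ω) 0

variable {X : ℕ → Ω → ℝ}

lemma reflectedWalk_succ (s : ℕ) (ω : Ω) :
    reflectedWalk X (s + 1) ω = max (reflectedWalk X s ω + X s ω) 0 := rfl

lemma reflectedWalk_nonneg (s : ℕ) (ω : Ω) : 0 ≤ reflectedWalk X s ω := by
  cases s with
  | zero => exact le_rfl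
  | succ s => exact le_max_right _ _

lemma reflectedWalk_le {c : ℝ} (hc : 0 ≤ c) (hX : ∀ s ω, X s ω ≤ c) (s : ℕ) (ω : Ω) :
    reflectedWalk X s ω ≤ s * c := by
  induction s with
  | zero => simp [reflectedWalk]
  | succ s ih =>
    rw [reflectedWalk_succ]
    push_cast
    exact max_le (by linarith [hX s ω]) (by positivity)

lemma stronglyAdapted_reflectedWalk {ℱ : Filtration ℕ m0}
    (hX : ∀ s, StronglyMeasurable[ℱ (s + 1)] (X s)) : StronglyAdapted ℱ (reflectedWalk X) := by
  intro s
  induction s with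
  | zero => exact stronglyMeasurable_const
  | succ s ih =>
    exact (((ih.mono (ℱ.mono s.le_succ)).measurable.add (hX s).measurable).max
      measurable_const).stronglyMeasurable

variable {μ : Measure Ω} [IsProbabilityMeasure μ] {ℱ : Filtration ℕ m0}

lemma integrable_reflectedWalk {c : ℝ} (hc : 0 ≤ c)
    (hXm : ∀ s, StronglyMeasurable[ℱ (s + 1)] (X s)) (hX : ∀ s ω, X s ω ≤ c) (t : ℕ) :
    Integrable (reflectedWalk X t) μ :=
  .of_mem_Icc 0 (t * c)
    ((stronglyAdapted_reflectedWalk hXm t).mono (ℱ.le t)).measurable.aemeasurable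
    (ae_of_all _ fun ω => ⟨reflectedWalk_nonneg t ω, reflectedWalk_le hc hX t ω⟩)

lemma integral_walkMean_reflectedWalk_le (hκ : 0 < κ) (hδ : 0 ≤ δ) (hδκ : δ ≤ 2 * κ)
    (hXm : ∀ s, StronglyMeasurable[ℱ (s + 1)] (X s)) (hXlo : ∀ s ω, -(2 * κ) ≤ X s ω)
    (hXhi : ∀ s ω, X s ω ≤ κ) (hXδ : ∀ s, μ[X s|ℱ s] ≤ᵐ[μ] fun _ => -δ) (s u : ℕ) :
    ∫ ω, walkMean κ δ u (reflectedWalk X s ω) ∂μ ≤ walkMean κ δ (u + s) 0 := by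
  induction s generalizing u with
  | zero => simp [reflectedWalk]
  | succ s ih =>
    calc ∫ ω, walkMean κ δ u (reflectedWalk X (s + 1) ω) ∂μ
        ≤ ∫ ω, walkStep κ δ (walkMean κ δ u) (reflectedWalk X s ω) ∂μ :=
          integral_max_add_le_walkStep (ℱ.le s) hκ hδ hδκ (monotone_walkMean hκ hδ hδκ u)
            (convexOn_walkMean hκ hδ hδκ u) (stronglyAdapted_reflectedWalk hXm s)
            (reflectedWalk_nonneg s) (reflectedWalk_le hκ.le hXhi s)
            ((hXm s).mono (ℱ.le (s + 1))) (hXlo s) (hXhi s) (hXδ s)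
      _ ≤ walkMean κ δ (u + (s + 1)) 0 := by
          rw [← walkMean_succ, ← add_assoc, add_right_comm]
          exact ih (u + 1)

theorem integral_reflectedWalk_le (hκ : 0 < κ) (hδ : 0 < δ) (hδκ : δ ≤ 2 * κ)
    (hXm : ∀ s, StronglyMeasurable[ℱ (s + 1)] (X s)) (hXlo : ∀ s ω, -(2 * κ) ≤ X s ω)
    (hXhi : ∀ s ω, X s ω ≤ κ) (hXδ : ∀ s, μ[X s|ℱ s] ≤ᵐ[μ] fun _ => -δ) (t : ℕ) :
    ∫ ω, reflectedWalk X t ω ∂μ ≤ 2 * κ ^ 2 / δ + κ := by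
  have h := integral_walkMean_reflectedWalk_le hκ hδ.le hδκ hXm hXlo hXhi hXδ t 0
  simp only [walkMean_zero, max_eq_left (reflectedWalk_nonneg t _), zero_add] at h
  exact h.trans (walkMean_apply_zero_le hκ hδ hδκ t)

end ReflectedWalk

section Comparison

variable {Ω : Type*} {m0 : MeasurableSpace Ω} {ℱ : Filtration ℕ m0} {Ψ Z : ℕ → Ω → ℝ} {B : ℝ}

def compensated (Ψ Z : ℕ → Ω → ℝ) (s : ℕ) (ω : Ω) : ℝ := Ψ s ω - ∑ τ ∈ Finset.Ico 1 s, Z τ ω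

/-- Clipping to `[-2κ, κ]` changes nothing almost surely (`comparisonIncrement_eq`) but makes
the bounds hold everywhere. -/
noncomputable def comparisonIncrement (κ δ B : ℝ) (Ψ Z : ℕ → Ω → ℝ) (s : ℕ) (ω : Ω) : ℝ :=
  if B ≤ compensated Ψ Z s ω then max (-(2 * κ)) (min (Ψ (s + 1) ω - Ψ s ω - Z s ω) κ) else -δ

lemma stronglyAdapted_compensated (hΨ : StronglyAdapted ℱ Ψ) (hZ : StronglyAdapted ℱ Z) :
    StronglyAdapted ℱ (compensated Ψ Z) := fun s =>
  (hΨ s).sub <| Finset.stronglyMeasurable_fun_sum _ fun τ hτ =>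
    (hZ τ).mono (ℱ.mono (Finset.mem_Ico.1 hτ).2.le)

lemma measurableSet_le_compensated (hΨ : StronglyAdapted ℱ Ψ) (hZ : StronglyAdapted ℱ Z)
    (s : ℕ) : MeasurableSet[ℱ s] {ω | B ≤ compensated Ψ Z s ω} :=
  measurableSet_le measurable_const (stronglyAdapted_compensated hΨ hZ s).measurable

lemma stronglyMeasurable_comparisonIncrement (hΨ : StronglyAdapted ℱ Ψ)
    (hZ : StronglyAdapted ℱ Z) (s : ℕ) :
    StronglyMeasurable[ℱ (s + 1)] (comparisonIncrement κ δ B Ψ Z s) := by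
  have hle := ℱ.mono s.le_succ
  refine .ite (hle _ (measurableSet_le_compensated hΨ hZ s)) ?_ stronglyMeasurable_const
  exact (measurable_const.max ((((hΨ (s + 1)).measurable.sub ((hΨ s).mono hle).measurable).sub
    ((hZ s).mono hle).measurable).min measurable_const)).stronglyMeasurable

lemma comparisonIncrement_mem_Icc (hδ : 0 < δ) (hδκ : δ ≤ 2 * κ) (s : ℕ) (ω : Ω) :
    comparisonIncrement κ δ B Ψ Z s ω ∈ Icc (-(2 * κ)) κ := by
  unfold comparisonIncrement
  split_ifs
  · exact ⟨le_max_left _ _, max_le (by linarith) (min_le_right _ _)⟩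
  · constructor <;> linarith

lemma comparisonIncrement_eq {s : ℕ} {ω : Ω} (hB : B ≤ compensated Ψ Z s ω)
    (hΨω : |Ψ (s + 1) ω - Ψ s ω| ≤ κ) (hZ0 : 0 ≤ Z s ω) (hZκ : Z s ω ≤ κ) :
    comparisonIncrement κ δ B Ψ Z s ω = Ψ (s + 1) ω - Ψ s ω - Z s ω := by
  have := abs_le.1 hΨω
  rw [comparisonIncrement, if_pos hB, min_eq_left (by linarith), max_eq_right (by linarith)]

lemma comparisonIncrement_ae_eq {μ : Measure Ω} (hZpos : ∀ t, ∀ᵐ ω ∂μ, 0 ≤ Z t ω)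
    (hbdd : ∀ t, ∀ᵐ ω ∂μ, |Ψ (t + 1) ω - Ψ t ω| ≤ κ) (hZbdd : ∀ t, ∀ᵐ ω ∂μ, Z t ω ≤ κ) (s : ℕ) :
    comparisonIncrement κ δ B Ψ Z s =ᵐ[μ]
      {ω | B ≤ compensated Ψ Z s ω}.indicator (fun ω => Ψ (s + 1) ω - Ψ s ω)
        + fun ω => if B ≤ compensated Ψ Z s ω then -Z s ω else -δ := by
  filter_upwards [hbdd s, hZpos s, hZbdd s] with ω hΨω hZ0 hZκ
  by_cases h : B ≤ compensated Ψ Z s ω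
  · simp only [Pi.add_apply, if_pos h, indicator_of_mem (show ω ∈ {ω | B ≤ _} from h),
      comparisonIncrement_eq h hΨω hZ0 hZκ]
    ring
  · simp [comparisonIncrement, h]

lemma condExp_comparisonIncrement_le {μ : Measure Ω} [IsFiniteMeasure μ]
    (hΨ : StronglyAdapted ℱ Ψ) (hZ : StronglyAdapted ℱ Z) (hZpos : ∀ t, ∀ᵐ ω ∂μ, 0 ≤ Z t ω)
    (hbdd : ∀ t, ∀ᵐ ω ∂μ, |Ψ (t + 1) ω - Ψ t ω| ≤ κ)
    (hdrift : ∀ t, ∀ᵐ ω ∂μ, B ≤ Ψ t ω →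
      (μ[fun ω => Ψ (t + 1) ω - Ψ t ω | ℱ t]) ω ≤ -δ + Z t ω)
    (hZbdd : ∀ t, ∀ᵐ ω ∂μ, Z t ω ≤ κ) (s : ℕ) :
    μ[comparisonIncrement κ δ B Ψ Z s|ℱ s] ≤ᵐ[μ] fun _ => -δ := by
  set A := {ω | B ≤ compensated Ψ Z s ω}
  have hA : MeasurableSet[ℱ s] A := measurableSet_le_compensated hΨ hZ s
  set ΔΨ : Ω → ℝ := fun ω => Ψ (s + 1) ω - Ψ s ω
  set Y : Ω → ℝ := fun ω => if B ≤ compensated Ψ Z s ω then -Z s ω else -δ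
  have hΔΨ_int : Integrable ΔΨ μ :=
    .of_mem_Icc (-κ) κ (show Measurable ΔΨ from ((hΨ (s + 1)).mono (ℱ.le _)).measurable.sub
      ((hΨ s).mono (ℱ.le s)).measurable).aemeasurable ((hbdd s).mono fun ω hω => abs_le.1 hω)
  have hY_meas : StronglyMeasurable[ℱ s] Y := .ite hA (hZ s).neg stronglyMeasurable_const
  have hY_int : Integrable Y μ := by
    refine .of_mem_Icc (-κ - |δ|) |δ| (hY_meas.mono (ℱ.le s)).measurable.aemeasurable ?_
    filter_upwards [hZpos s, hZbdd s] with ω hZ0 hZκ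
    simp only [Y]
    split_ifs <;> constructor <;> linarith [neg_abs_le δ, le_abs_self δ]
  have hcond : μ[comparisonIncrement κ δ B Ψ Z s|ℱ s] =ᵐ[μ] A.indicator (μ[ΔΨ|ℱ s]) + Y := by
    refine (condExp_congr_ae (comparisonIncrement_ae_eq hZpos hbdd hZbdd s)).trans ?_
    refine (condExp_add (hΔΨ_int.indicator (ℱ.le s _ hA)) hY_int _).trans ?_
    rw [condExp_of_stronglyMeasurable (ℱ.le s) hY_meas hY_int]
    exact (condExp_indicator hΔΨ_int hA).add (Filter.EventuallyEq.refl _ _)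
  filter_upwards [hcond, hdrift s, ae_all_iff.2 hZpos] with ω hω hd hz
  rw [hω]
  by_cases h : B ≤ compensated Ψ Z s ω
  · have hΨB : B ≤ Ψ s ω := h.trans (sub_le_self _ (Finset.sum_nonneg fun τ _ => hz τ))
    simp only [Pi.add_apply, Y, if_pos h, indicator_of_mem (show ω ∈ A from h)]
    linarith [hd hΨB]
  · simp [Y, h, A]

lemma compensated_le_reflectedWalk {ω : Ω} (hBκ : 0 ≤ B + κ) (hΨ1 : Ψ 1 ω = 0)
    (hbdd : ∀ t, |Ψ (t + 1) ω - Ψ t ω| ≤ κ) (hZpos : ∀ t, 0 ≤ Z t ω) (hZbdd : ∀ t, Z t ω ≤ κ)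
    {s : ℕ} (hs : 1 ≤ s) :
    compensated Ψ Z s ω ≤ B + κ + reflectedWalk (comparisonIncrement κ δ B Ψ Z) s ω := by
  induction s, hs using Nat.le_induction with
  | base =>
    simp only [compensated, Finset.Ico_self, Finset.sum_empty, hΨ1, sub_zero]
    linarith [reflectedWalk_nonneg (X := comparisonIncrement κ δ B Ψ Z) 1 ω]
  | succ s hs ih =>
    have hstep : compensated Ψ Z (s + 1) ω
        = compensated Ψ Z s ω + (Ψ (s + 1) ω - Ψ s ω - Z s ω) := by
      simp only [compensated, Finset.sum_Ico_succ_top hs]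
      ring
    rw [hstep, reflectedWalk_succ]
    set R := reflectedWalk (comparisonIncrement κ δ B Ψ Z)
    by_cases h : B ≤ compensated Ψ Z s ω
    · rw [comparisonIncrement_eq h (hbdd s) (hZpos s) (hZbdd s)]
      linarith [le_max_left (R s ω + (Ψ (s + 1) ω - Ψ s ω - Z s ω)) 0]
    · linarith [(abs_le.1 (hbdd s)).2, hZpos s,
        le_max_right (R s ω + comparisonIncrement κ δ B Ψ Z s ω) 0]

lemma integral_le_integral_reflectedWalk_add {μ : Measure Ω} [IsProbabilityMeasure μ]
    (hΨ : StronglyAdapted ℱ Ψ) (hZ : StronglyAdapted ℱ Z) (hΨ1 : ∀ᵐ ω ∂μ, Ψ 1 ω = 0)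
    (hZpos : ∀ t, ∀ᵐ ω ∂μ, 0 ≤ Z t ω) (hκ : 0 < κ) (hδ : 0 < δ) (hδκ : δ ≤ 2 * κ)
    (hBκ : 0 ≤ B + κ) (hbdd : ∀ t, ∀ᵐ ω ∂μ, |Ψ (t + 1) ω - Ψ t ω| ≤ κ)
    (hZbdd : ∀ t, ∀ᵐ ω ∂μ, Z t ω ≤ κ) {t : ℕ} (ht : 1 ≤ t) :
    ∫ ω, Ψ t ω ∂μ ≤ B + κ + ∫ ω, reflectedWalk (comparisonIncrement κ δ B Ψ Z) t ω ∂μ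
      + ∫ ω, (∑ τ ∈ Finset.Ico 1 t, Z τ ω) ∂μ := by
  set R := reflectedWalk (comparisonIncrement κ δ B Ψ Z)
  have hpath : ∀ᵐ ω ∂μ, Ψ t ω ≤ B + κ + R t ω + ∑ τ ∈ Finset.Ico 1 t, Z τ ω := by
    filter_upwards [hΨ1, ae_all_iff.2 hbdd, ae_all_iff.2 hZpos, ae_all_iff.2 hZbdd]
      with ω hΨ1ω hbddω hZposω hZbddω
    have := compensated_le_reflectedWalk (δ := δ) hBκ hΨ1ω hbddω hZposω hZbddω ht
    rw [compensated] at this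
    linarith
  have hΨ_int : Integrable (Ψ t) μ :=
    integrable_of_abs_sub_le (fun s => ((hΨ s).mono (ℱ.le s)).aestronglyMeasurable) hbdd
      ((integrable_zero _ _ μ).congr (hΨ1.mono fun _ h => h.symm)) ht
  have hR_int : Integrable (R t) μ :=
    integrable_reflectedWalk hκ.le (stronglyMeasurable_comparisonIncrement hΨ hZ)
      (fun s ω => (comparisonIncrement_mem_Icc hδ hδκ s ω).2) t
  have hSZ_int : Integrable (fun ω => ∑ τ ∈ Finset.Ico 1 t, Z τ ω) μ :=
    integrable_finsetSum _ fun τ _ =>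
      .of_mem_Icc 0 κ ((hZ τ).mono (ℱ.le τ)).measurable.aemeasurable ((hZpos τ).and (hZbdd τ))
  have hBR_int : Integrable (fun ω => B + κ + R t ω) μ := (integrable_const _).add hR_int
  calc ∫ ω, Ψ t ω ∂μ ≤ ∫ ω, (B + κ + R t ω + ∑ τ ∈ Finset.Ico 1 t, Z τ ω) ∂μ :=
        integral_mono_ae hΨ_int (hBR_int.add hSZ_int) hpath
    _ = B + κ + ∫ ω, R t ω ∂μ + ∫ ω, (∑ τ ∈ Finset.Ico 1 t, Z τ ω) ∂μ := by
        rw [integral_add hBR_int hSZ_int, integral_add (integrable_const _) hR_int,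
          integral_const, probReal_univ, one_smul]

end Comparison

/-- Generalized drift lemma (Lemma bound-from-drift): for adapted processes `Ψ`, `Z` with
`Ψ 1 = 0`, `Z ≥ 0`, bounded increments, a conditional drift bound `−δ + Z t` above level `B`,
and `Z t ≤ κ`, the expectation of `Ψ t` is bounded by `4κ + B + 2κ²/δ + E[∑_{τ=1}^{t−1} Z τ]`. -/
theorem stmt_12 {Ω : Type*} {m0 : MeasurableSpace Ω} (μ : Measure Ω) [IsProbabilityMeasure μ]
    (ℱ : Filtration ℕ m0) (Ψ Z : ℕ → Ω → ℝ)
    (hΨad : StronglyAdapted ℱ Ψ) (hZad : StronglyAdapted ℱ Z)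
    (hΨ1 : ∀ᵐ ω ∂μ, Ψ 1 ω = 0)
    (hZpos : ∀ t : ℕ, ∀ᵐ ω ∂μ, 0 ≤ Z t ω)
    (κ δ B : ℝ) (hκ : 0 < κ) (hδ : 0 < δ) (hB : 0 < B) (hδκ : δ ≤ 2 * κ)
    (hbdd : ∀ t : ℕ, ∀ᵐ ω ∂μ, |Ψ (t + 1) ω - Ψ t ω| ≤ κ)
    (hdrift : ∀ t : ℕ, ∀ᵐ ω ∂μ, B ≤ Ψ t ω →
      (μ[fun ω => Ψ (t + 1) ω - Ψ t ω | ℱ t]) ω ≤ -δ + Z t ω)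
    (hZbdd : ∀ t : ℕ, ∀ᵐ ω ∂μ, Z t ω ≤ κ)
    (t : ℕ) (ht : 1 ≤ t) :
    ∫ ω, Ψ t ω ∂μ ≤ 4 * κ + B + 2 * κ ^ 2 / δ + ∫ ω, (∑ τ ∈ Finset.Ico 1 t, Z τ ω) ∂μ := by
  have hX_mem := comparisonIncrement_mem_Icc (B := B) (Ψ := Ψ) (Z := Z) hδ hδκ
  have hR := integral_reflectedWalk_le hκ hδ hδκ (stronglyMeasurable_comparisonIncrement hΨad hZad)
    (fun s ω => (hX_mem s ω).1) (fun s ω => (hX_mem s ω).2)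
    (condExp_comparisonIncrement_le hΨad hZad hZpos hbdd hdrift hZbdd) t
  have hcomp := integral_le_integral_reflectedWalk_add hΨad hZad hΨ1 hZpos hκ hδ hδκ
    (by linarith : 0 ≤ B + κ) hbdd hZbdd ht
  linarith
end

section
/- Consider the single-queue setting: λ ∈ [0,1), ε ∈ (0,1], service rates μ_k for servers k, with μ* = max_k μ_k = λ + ε. Let Q(t) be the queue length under a policy with Q(1) = 0 and Q(t+1) = Q(t) − S_{J(t)}(t) + A(t), where A(t) is Bernoulli(λ), S_{J(t)}(t) is Bernoulli(μ_{J(t)}) given the choice J(t) (with μ_⊥ = 0 when the queue is empty), and arrivals and services in period t are independent of the history. Define the satisficing regret SaR(T) = ∑_{t=1}^T (μ* − μ_{J(t)} − ε/2)⁺·1{Q(t) ≥ 1}. Then for every T ≥ 1, (1/T)·∑_{t=1}^T E[Q(t)] ≤ 4/ε + (8/ε²)·E[SaR(T)²]/T. -/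
open MeasureTheory Finset

/-!
Arrivals and services are Bernoulli and an empty queue is never served, so the queue is a
nonnegative integer path started at `0` whose increments are at most `1`. Squaring the recursion
`Q(t+1) = Q(t) - S(t) + A(t)` and using the conditional means of `A(t)` and `S(t)` gives the drift
`E[Q(t+1)²] - E[Q(t)²] ≤ 1 + 2 E[Q(t) G(t)] - ε E[Q(t)]`, where `G(t)` is the summand of the
satisficing regret: on `{Q ≥ 1}` one has `λ - μ_{J(t)} ≤ G(t) - ε/2`. Telescoping,
`ε ∑ E[Q] ≤ T + 2 ∑ E[Q G]`. Pathwise `∑ Q G ≤ M · SaR` with `M = max Q`, and a path climbing from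
`0` in unit steps has visited the levels `1, …, M` before its peak, so `M² ≤ 2 ∑ Q`; by AM-GM
`2 ∑ Q G ≤ (ε/2) ∑ Q + (4/ε) SaR²`. Taking expectations and dividing by `T` gives the bound.
-/

lemma mul_succ_le_two_mul_sum_Icc {q : ℕ → ℝ} (hq0 : ∀ t, 1 ≤ t → 0 ≤ q t) (hq1 : q 1 = 0)
    (hstep : ∀ t, q (t + 1) ≤ q t + 1) {s : ℕ} (hs : 1 ≤ s) {m : ℕ} (hm : (m : ℝ) ≤ q s) :
    (m : ℝ) * (m + 1) ≤ 2 * ∑ t ∈ Icc 1 s, q t := by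
  induction s, hs using Nat.le_induction generalizing m with
  | base =>
    have hm0 : (m : ℝ) = 0 := le_antisymm (hm.trans hq1.le) m.cast_nonneg
    simp [hm0, hq1]
  | succ s hs ih =>
    rw [sum_Icc_succ_top (by omega)]
    cases m with
    | zero =>
      have : 0 ≤ ∑ t ∈ Icc 1 s, q t := sum_nonneg fun t ht => hq0 t (mem_Icc.1 ht).1
      simp only [CharP.cast_eq_zero, zero_mul]
      linarith [hq0 (s + 1) (by omega)]
    | succ k =>
      push_cast at hm ⊢
      have := ih (m := k) (by linarith [hstep s])
      nlinarith

lemma sq_le_two_mul_sum_Icc {q : ℕ → ℝ} (hnat : ∀ t, 1 ≤ t → ∃ n : ℕ, q t = n) (hq1 : q 1 = 0)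
    (hstep : ∀ t, q (t + 1) ≤ q t + 1) {s T : ℕ} (hs : s ∈ Icc 1 T) :
    q s ^ 2 ≤ 2 * ∑ t ∈ Icc 1 T, q t := by
  have hq0 : ∀ t, 1 ≤ t → 0 ≤ q t := fun t ht => by
    obtain ⟨n, hn⟩ := hnat t ht
    exact hn ▸ n.cast_nonneg
  obtain ⟨hs1, hsT⟩ := mem_Icc.1 hs
  obtain ⟨n, hn⟩ := hnat s hs1
  calc q s ^ 2 ≤ n * (n + 1) := by rw [hn]; nlinarith
    _ ≤ 2 * ∑ t ∈ Icc 1 s, q t := mul_succ_le_two_mul_sum_Icc hq0 hq1 hstep hs1 hn.ge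
    _ ≤ 2 * ∑ t ∈ Icc 1 T, q t := by
      gcongr 2 * ?_
      exact sum_le_sum_of_subset_of_nonneg (Icc_subset_Icc_right hsT)
        fun t ht _ => hq0 t (mem_Icc.1 ht).1

lemma two_mul_sum_mul_le {ι : Type*} (s : Finset ι) {x g : ι → ℝ} {ε : ℝ} (hε : 0 < ε)
    (hg : ∀ i ∈ s, 0 ≤ g i) (hx : ∀ i ∈ s, x i ^ 2 ≤ 2 * ∑ j ∈ s, x j) :
    2 * ∑ i ∈ s, x i * g i ≤ ε / 2 * ∑ i ∈ s, x i + 4 / ε * (∑ i ∈ s, g i) ^ 2 := by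
  rcases s.eq_empty_or_nonempty with rfl | hs
  · simp
  obtain ⟨k, hk, hmax⟩ := s.exists_max_image x hs
  set G := ∑ i ∈ s, g i
  have hsum : ∑ i ∈ s, x i * g i ≤ x k * G := by
    rw [mul_sum]
    exact sum_le_sum fun i hi => mul_le_mul_of_nonneg_right (hmax i hi) (hg i hi)
  have amgm : 2 * (x k * G) ≤ ε / 4 * x k ^ 2 + 4 / ε * G ^ 2 := by
    have key : ε / 4 * x k ^ 2 + 4 / ε * G ^ 2 - 2 * (x k * G) =
        (ε * x k - 4 * G) ^ 2 / (4 * ε) := by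
      field_simp
      ring
    have : 0 ≤ (ε * x k - 4 * G) ^ 2 / (4 * ε) := by positivity
    linarith
  nlinarith [hx k hk]

lemma one_div_mul_le_of_half_mul_le {ε T S R : ℝ} (hε : 0 < ε) (hT : 0 < T) (hR : 0 ≤ R)
    (h : ε / 2 * S ≤ T + 4 / ε * R) : 1 / T * S ≤ 4 / ε + 8 / ε ^ 2 * R / T := by
  have hS : S ≤ 2 / ε * T + 8 / ε ^ 2 * R :=
    calc S = 2 / ε * (ε / 2 * S) := by field_simp
      _ ≤ 2 / ε * (T + 4 / ε * R) := by gcongr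
      _ = 2 / ε * T + 8 / ε ^ 2 * R := by ring
  calc 1 / T * S ≤ 1 / T * (2 / ε * T + 8 / ε ^ 2 * R) := by gcongr
    _ = 2 / ε + 8 / ε ^ 2 * R / T := by field_simp
    _ ≤ 4 / ε + 8 / ε ^ 2 * R / T := by gcongr; norm_num

lemma exists_nat_lt_of_queue_recursion {q a s : ℕ → ℝ} (hq1 : q 1 = 0)
    (hstep : ∀ t, q (t + 1) = q t - s t + a t) (ha : ∀ t, a t = 0 ∨ a t = 1)
    (hs : ∀ t, s t = 0 ∨ s t = 1) (hidle : ∀ t, q t = 0 → s t = 0) {t : ℕ} (ht : 1 ≤ t) :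
    ∃ n : ℕ, n < t ∧ q t = n := by
  induction t, ht using Nat.le_induction with
  | base => exact ⟨0, one_pos, by simp [hq1]⟩
  | succ t ht ih =>
    obtain ⟨n, hnt, hn⟩ := ih
    rw [hstep, hn]
    rcases ha t with ha | ha <;> rcases hs t with hs' | hs' <;> rw [ha, hs']
    · exact ⟨n, by omega, by ring⟩
    · obtain ⟨k, rfl⟩ : ∃ k, n = k + 1 :=
        Nat.exists_eq_succ_of_ne_zero fun h0 => by simp [hidle t (by simp [hn, h0])] at hs'
      exact ⟨k, by omega, by push_cast; ring⟩
    · exact ⟨n + 1, by omega, by push_cast; ring⟩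
    · exact ⟨n, by omega, by ring⟩

/-- The period-`t` summand of the satisficing regret, at `r = μ_{J(t)}`, `q = Q(t)` and
`μ* = lam + ε`. -/
noncomputable def satisficingRegretTerm (lam ε r q : ℝ) : ℝ :=
  max (lam + ε - r - ε / 2) 0 * if 1 ≤ q then 1 else 0

lemma satisficingRegretTerm_nonneg (lam ε r q : ℝ) : 0 ≤ satisficingRegretTerm lam ε r q :=
  mul_nonneg (le_max_right _ _) (by split_ifs <;> norm_num)

lemma satisficingRegretTerm_le {r : ℝ} (hr : 0 ≤ r) (lam ε q : ℝ) :
    satisficingRegretTerm lam ε r q ≤ max (lam + ε / 2) 0 := by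
  unfold satisficingRegretTerm
  split_ifs
  · rw [mul_one]; exact max_le_max (by linarith) le_rfl
  · simp

lemma natCast_mul_sub_le_satisficingRegretTerm (lam ε r : ℝ) (n : ℕ) :
    (n : ℝ) * (lam - r) ≤ n * satisficingRegretTerm lam ε r n - ε / 2 * n := by
  rcases n.eq_zero_or_pos with rfl | hn
  · simp
  have hn : (1 : ℝ) ≤ n := by exact_mod_cast hn
  rw [satisficingRegretTerm, if_pos hn, mul_one]
  nlinarith [le_max_left (lam + ε - r - ε / 2) 0]

section

variable {Ω : Type*} {m m0 : MeasurableSpace Ω} {μ : Measure Ω}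

lemma integral_mul_eq_of_condExp_ae_eq (hm : m ≤ m0) [SigmaFinite (μ.trim hm)] {X Y h : Ω → ℝ}
    (hX : StronglyMeasurable[m] X) (hXY : Integrable (fun ω => X ω * Y ω) μ)
    (hY : Integrable Y μ) (hYh : μ[Y | m] =ᵐ[μ] h) :
    Integrable (fun ω => X ω * h ω) μ ∧ ∫ ω, X ω * Y ω ∂μ = ∫ ω, X ω * h ω ∂μ := by
  have hcond : μ[X * Y | m] =ᵐ[μ] X * h :=
    (condExp_mul_of_stronglyMeasurable_left hX hXY hY).trans (Filter.EventuallyEq.rfl.mul hYh)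
  exact ⟨integrable_condExp.congr hcond,
    (integral_condExp hm).symm.trans (integral_congr_ae hcond)⟩

lemma ae_eq_zero_of_condExp_eq_zero (hm : m ≤ m0) [SigmaFinite (μ.trim hm)] {f : Ω → ℝ}
    {s : Set Ω} (hs : MeasurableSet[m] s) (hf : Integrable f μ) (hf0 : 0 ≤ᵐ[μ] f)
    (hcond : ∀ᵐ ω ∂μ, ω ∈ s → μ[f | m] ω = 0) : ∀ᵐ ω ∂μ, ω ∈ s → f ω = 0 := by
  rw [← ae_restrict_iff' (hm s hs)] at hcond ⊢
  change f =ᵐ[μ.restrict s] 0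
  rw [← setIntegral_eq_zero_iff_of_nonneg_ae (ae_restrict_of_ae hf0) hf.integrableOn,
    ← setIntegral_condExp hm hf hs]
  exact integral_eq_zero_of_ae hcond

lemma memLp_top_of_ae_eq_zero_or_one {f : Ω → ℝ} (hf : Measurable f)
    (h01 : ∀ᵐ ω ∂μ, f ω = 0 ∨ f ω = 1) : MemLp f ⊤ μ :=
  memLp_top_of_bound hf.aestronglyMeasurable 1 <| h01.mono fun ω h => by
    rcases h with h | h <;> simp [h]

lemma memLp_top_of_ae_eq_natCast_lt {f : Ω → ℝ} (hf : AEStronglyMeasurable f μ) {N : ℕ}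
    (hN : ∀ᵐ ω ∂μ, ∃ n : ℕ, n < N ∧ f ω = n) : MemLp f ⊤ μ :=
  memLp_top_of_bound hf N <| hN.mono fun ω ⟨n, hn, h⟩ => by
    rw [h, Real.norm_natCast]; exact_mod_cast hn.le

end

section Queue

variable {Ω : Type*} {m0 : MeasurableSpace Ω} {μ : Measure Ω} {ℱ : Filtration ℕ m0} {K : ℕ}
  {μs : Fin K → ℝ} {J : ℕ → Ω → Option (Fin K)} {lam ε : ℝ} {A Serv Q : ℕ → Ω → ℝ}

lemma ae_serv_eq_zero_of_queue_eq_zero [IsFiniteMeasure μ] (hQad : Adapted ℱ Q)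
    (hJempty : ∀ t ω, Q t ω = 0 → J t ω = none)
    (hS01 : ∀ t, ∀ᵐ ω ∂μ, Serv t ω = 0 ∨ Serv t ω = 1) (hSmeas : ∀ t, Measurable (Serv t))
    (hScond : ∀ t, μ[Serv t | ℱ t] =ᵐ[μ] fun ω => (J t ω).elim 0 μs) (t : ℕ) :
    ∀ᵐ ω ∂μ, Q t ω = 0 → Serv t ω = 0 :=
  ae_eq_zero_of_condExp_eq_zero (ℱ.le t) (s := {ω | Q t ω = 0})
    (hQad t (measurableSet_singleton 0))
    ((memLp_top_of_ae_eq_zero_or_one (hSmeas t) (hS01 t)).integrable le_top)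
    ((hS01 t).mono fun ω h => by rcases h with h | h <;> simp [h])
    ((hScond t).mono fun ω h hω => by simp [h, hJempty t ω hω])

lemma ae_queue_path (hQ1 : ∀ ω, Q 1 ω = 0)
    (hQdyn : ∀ t ω, Q (t + 1) ω = Q t ω - Serv t ω + A t ω)
    (hA01 : ∀ t, ∀ᵐ ω ∂μ, A t ω = 0 ∨ A t ω = 1)
    (hS01 : ∀ t, ∀ᵐ ω ∂μ, Serv t ω = 0 ∨ Serv t ω = 1)
    (hidle : ∀ t, ∀ᵐ ω ∂μ, Q t ω = 0 → Serv t ω = 0) :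
    ∀ᵐ ω ∂μ, (∀ t, 1 ≤ t → ∃ n : ℕ, n < t ∧ Q t ω = n) ∧ ∀ t, Q (t + 1) ω ≤ Q t ω + 1 := by
  filter_upwards [ae_all_iff.2 hA01, ae_all_iff.2 hS01, ae_all_iff.2 hidle] with ω hA hS hI
  refine ⟨fun t ht => exists_nat_lt_of_queue_recursion (hQ1 ω) (fun t => hQdyn t ω) hA hS hI ht,
    fun t => ?_⟩
  rw [hQdyn]
  rcases hA t with h | h <;> rcases hS t with h' | h' <;> rw [h, h'] <;> linarith

lemma memLp_top_satisficingRegretTerm (hμs0 : ∀ k, 0 ≤ μs k) (hQad : Adapted ℱ Q)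
    (hJad : ∀ t, Measurable[ℱ t] (fun ω => (J t ω).elim 0 μs)) (t : ℕ) :
    MemLp (fun ω => satisficingRegretTerm lam ε ((J t ω).elim 0 μs) (Q t ω)) ⊤ μ := by
  have hr : Measurable fun ω => (J t ω).elim 0 μs := (hJad t).mono (ℱ.le t) le_rfl
  have hq : Measurable (Q t) := (hQad t).mono (ℱ.le t) le_rfl
  have hmeas : Measurable fun ω => satisficingRegretTerm lam ε ((J t ω).elim 0 μs) (Q t ω) :=
    (((measurable_const.sub hr).sub measurable_const).max measurable_const).mul
      (Measurable.ite (measurableSet_le measurable_const hq) measurable_const measurable_const)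
  refine memLp_top_of_bound hmeas.aestronglyMeasurable (max (lam + ε / 2) 0)
    (ae_of_all _ fun ω => ?_)
  have hr0 : 0 ≤ (J t ω).elim 0 μs := by cases J t ω <;> simp [hμs0]
  rw [Real.norm_of_nonneg (satisficingRegretTerm_nonneg ..)]
  exact satisficingRegretTerm_le hr0 ..

lemma integral_sq_succ_le [IsProbabilityMeasure μ]
    (hQdyn : ∀ t ω, Q (t + 1) ω = Q t ω - Serv t ω + A t ω) (hQad : Adapted ℱ Q)
    (hA01 : ∀ t, ∀ᵐ ω ∂μ, A t ω = 0 ∨ A t ω = 1)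
    (hS01 : ∀ t, ∀ᵐ ω ∂μ, Serv t ω = 0 ∨ Serv t ω = 1)
    (hAmeas : ∀ t, Measurable (A t)) (hSmeas : ∀ t, Measurable (Serv t))
    (hAcond : ∀ t, μ[A t | ℱ t] =ᵐ[μ] fun _ => lam)
    (hScond : ∀ t, μ[Serv t | ℱ t] =ᵐ[μ] fun ω => (J t ω).elim 0 μs) {t : ℕ}
    (hQ : MemLp (Q t) ⊤ μ) :
    ∫ ω, Q (t + 1) ω ^ 2 ∂μ ≤ ∫ ω, Q t ω ^ 2 ∂μ + 1 +
      2 * (lam * ∫ ω, Q t ω ∂μ - ∫ ω, Q t ω * (J t ω).elim 0 μs ∂μ) := by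
  have hA := memLp_top_of_ae_eq_zero_or_one (hAmeas t) (hA01 t)
  have hS := memLp_top_of_ae_eq_zero_or_one (hSmeas t) (hS01 t)
  have hQsq : Integrable (fun ω => Q t ω ^ 2) μ :=
    ((hQ.mul hQ).integrable le_top).congr (ae_of_all _ fun ω => (sq (Q t ω)).symm)
  have hQAi : Integrable (fun ω => Q t ω * A t ω) μ := (hA.mul hQ).integrable le_top
  have hQSi : Integrable (fun ω => Q t ω * Serv t ω) μ := (hS.mul hQ).integrable le_top
  have hQA := (integral_mul_eq_of_condExp_ae_eq (ℱ.le t) (hQad t).stronglyMeasurable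
    hQAi (hA.integrable le_top) (hAcond t)).2
  have hQS := (integral_mul_eq_of_condExp_ae_eq (ℱ.le t) (hQad t).stronglyMeasurable
    hQSi (hS.integrable le_top) (hScond t)).2
  have hi1 : Integrable (fun ω => Q t ω ^ 2 + 1) μ := hQsq.add (integrable_const 1)
  have hi2 : Integrable (fun ω => 2 * (Q t ω * A t ω - Q t ω * Serv t ω)) μ :=
    (hQAi.sub hQSi).const_mul 2
  calc ∫ ω, Q (t + 1) ω ^ 2 ∂μ
      ≤ ∫ ω, Q t ω ^ 2 + 1 + 2 * (Q t ω * A t ω - Q t ω * Serv t ω) ∂μ := by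
        refine integral_mono_of_nonneg (ae_of_all _ fun ω => sq_nonneg _) (hi1.add hi2) ?_
        filter_upwards [hA01 t, hS01 t] with ω ha hs
        rw [hQdyn]
        rcases ha with ha | ha <;> rcases hs with hs | hs <;> rw [ha, hs] <;> nlinarith
    _ = _ := by
        rw [integral_add hi1 hi2, integral_add hQsq (integrable_const 1), integral_const_mul,
          integral_sub hQAi hQSi, hQA, hQS, integral_mul_const]
        simp [mul_comm]

lemma integral_sq_succ_sub_le [IsProbabilityMeasure μ] (hμs0 : ∀ k, 0 ≤ μs k)
    (hQdyn : ∀ t ω, Q (t + 1) ω = Q t ω - Serv t ω + A t ω) (hQad : Adapted ℱ Q)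
    (hJad : ∀ t, Measurable[ℱ t] (fun ω => (J t ω).elim 0 μs))
    (hA01 : ∀ t, ∀ᵐ ω ∂μ, A t ω = 0 ∨ A t ω = 1)
    (hS01 : ∀ t, ∀ᵐ ω ∂μ, Serv t ω = 0 ∨ Serv t ω = 1)
    (hAmeas : ∀ t, Measurable (A t)) (hSmeas : ∀ t, Measurable (Serv t))
    (hAcond : ∀ t, μ[A t | ℱ t] =ᵐ[μ] fun _ => lam)
    (hScond : ∀ t, μ[Serv t | ℱ t] =ᵐ[μ] fun ω => (J t ω).elim 0 μs) {t : ℕ}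
    (hQt : ∀ᵐ ω ∂μ, ∃ n : ℕ, n < t ∧ Q t ω = n) :
    ∫ ω, Q (t + 1) ω ^ 2 ∂μ - ∫ ω, Q t ω ^ 2 ∂μ ≤
      1 + (2 * ∫ ω, Q t ω * satisficingRegretTerm lam ε ((J t ω).elim 0 μs) (Q t ω) ∂μ
        - ε * ∫ ω, Q t ω ∂μ) := by
  set r : Ω → ℝ := fun ω => (J t ω).elim 0 μs
  set G : Ω → ℝ := fun ω => satisficingRegretTerm lam ε (r ω) (Q t ω)
  have hQ := memLp_top_of_ae_eq_natCast_lt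
    ((hQad t).mono (ℱ.le t) le_rfl).aestronglyMeasurable hQt
  have hQi : Integrable (Q t) μ := hQ.integrable le_top
  have hQG : Integrable (fun ω => Q t ω * G ω) μ :=
    ((memLp_top_satisficingRegretTerm hμs0 hQad hJad t).mul hQ).integrable le_top
  have hS := memLp_top_of_ae_eq_zero_or_one (hSmeas t) (hS01 t)
  have hQr : Integrable (fun ω => Q t ω * r ω) μ :=
    (integral_mul_eq_of_condExp_ae_eq (ℱ.le t) (hQad t).stronglyMeasurable
      ((hS.mul hQ).integrable le_top) (hS.integrable le_top) (hScond t)).1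
  have hgap : lam * ∫ ω, Q t ω ∂μ - ∫ ω, Q t ω * r ω ∂μ ≤
      ∫ ω, Q t ω * G ω ∂μ - ε / 2 * ∫ ω, Q t ω ∂μ := by
    rw [← integral_const_mul, ← integral_sub (hQi.const_mul lam) hQr, ← integral_const_mul,
      ← integral_sub hQG (hQi.const_mul _)]
    refine integral_mono_ae ((hQi.const_mul lam).sub hQr) (hQG.sub (hQi.const_mul _)) ?_
    filter_upwards [hQt] with ω hω
    obtain ⟨n, -, hn⟩ := hω
    have := natCast_mul_sub_le_satisficingRegretTerm lam ε (r ω) n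
    simp only [G, hn]
    linarith
  linarith [integral_sq_succ_le hQdyn hQad hA01 hS01 hAmeas hSmeas hAcond hScond hQ]

lemma two_mul_sum_integral_mul_le [IsFiniteMeasure μ] (hε : 0 < ε)
    (hμs0 : ∀ k, 0 ≤ μs k) (hQad : Adapted ℱ Q)
    (hJad : ∀ t, Measurable[ℱ t] (fun ω => (J t ω).elim 0 μs)) (hQ1 : ∀ ω, Q 1 ω = 0)
    (hpath : ∀ᵐ ω ∂μ, (∀ t, 1 ≤ t → ∃ n : ℕ, n < t ∧ Q t ω = n) ∧
      ∀ t, Q (t + 1) ω ≤ Q t ω + 1) (T : ℕ) :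
    2 * ∑ t ∈ Icc 1 T,
        ∫ ω, Q t ω * satisficingRegretTerm lam ε ((J t ω).elim 0 μs) (Q t ω) ∂μ ≤
      ε / 2 * ∑ t ∈ Icc 1 T, ∫ ω, Q t ω ∂μ + 4 / ε *
        ∫ ω, (∑ t ∈ Icc 1 T, satisficingRegretTerm lam ε ((J t ω).elim 0 μs) (Q t ω)) ^ 2 ∂μ := by
  have hQ : ∀ t ∈ Icc 1 T, MemLp (Q t) ⊤ μ := fun t ht =>
    memLp_top_of_ae_eq_natCast_lt ((hQad t).mono (ℱ.le t) le_rfl).aestronglyMeasurable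
      (hpath.mono fun ω h => h.1 t (mem_Icc.1 ht).1)
  have hG := memLp_top_satisficingRegretTerm (μ := μ) (lam := lam) (ε := ε) hμs0 hQad hJad
  have hQG : ∀ t ∈ Icc 1 T, Integrable
      (fun ω => Q t ω * satisficingRegretTerm lam ε ((J t ω).elim 0 μs) (Q t ω)) μ :=
    fun t ht => ((hG t).mul (hQ t ht)).integrable le_top
  have hQi : ∀ t ∈ Icc 1 T, Integrable (Q t) μ := fun t ht => (hQ t ht).integrable le_top
  have hsumG := memLp_finsetSum (Icc 1 T) fun t _ => hG t
  have hsumQ : Integrable (fun ω => ε / 2 * ∑ t ∈ Icc 1 T, Q t ω) μ :=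
    (integrable_finsetSum _ hQi).const_mul _
  have hsq : Integrable (fun ω => 4 / ε *
      (∑ t ∈ Icc 1 T, satisficingRegretTerm lam ε ((J t ω).elim 0 μs) (Q t ω)) ^ 2) μ :=
    (((hsumG.mul hsumG).integrable le_top).congr (ae_of_all _ fun ω => (sq _).symm)).const_mul _
  rw [← integral_finsetSum _ hQG, ← integral_finsetSum _ hQi, ← integral_const_mul,
    ← integral_const_mul, ← integral_const_mul, ← integral_add hsumQ hsq]
  refine integral_mono_ae ((integrable_finsetSum _ hQG).const_mul 2) (hsumQ.add hsq) ?_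
  filter_upwards [hpath] with ω hω
  exact two_mul_sum_mul_le _ hε (fun t _ => satisficingRegretTerm_nonneg ..) fun s hs =>
    sq_le_two_mul_sum_Icc (fun t ht => (hω.1 t ht).imp fun _ hn => hn.2) (hQ1 ω) hω.2 hs

end Queue

theorem stmt_14_general {Ω : Type*} {m0 : MeasurableSpace Ω} (μ : Measure Ω) [IsProbabilityMeasure μ]
    (ℱ : Filtration ℕ m0)
    (K : ℕ)
    (lam ε : ℝ) (hε : ε ∈ Set.Ioc (0 : ℝ) 1)
    (μs : Fin K → ℝ) (hμs0 : ∀ k, 0 ≤ μs k)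
    (J : ℕ → Ω → Option (Fin K))
    (A Serv : ℕ → Ω → ℝ) (Q : ℕ → Ω → ℝ)
    (hQ1 : ∀ ω, Q 1 ω = 0)
    (hQdyn : ∀ t ω, Q (t + 1) ω = Q t ω - Serv t ω + A t ω)
    (hQad : Adapted ℱ Q)
    (hJad : ∀ t, Measurable[ℱ t] (fun ω => (J t ω).elim 0 μs))
    (hJempty : ∀ t ω, Q t ω = 0 → J t ω = none)
    (hA01 : ∀ t, ∀ᵐ ω ∂μ, A t ω = 0 ∨ A t ω = 1)
    (hS01 : ∀ t, ∀ᵐ ω ∂μ, Serv t ω = 0 ∨ Serv t ω = 1)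
    (hAmeas : ∀ t, Measurable (A t)) (hSmeas : ∀ t, Measurable (Serv t))
    (hAcond : ∀ t, μ[A t | ℱ t] =ᵐ[μ] fun _ => lam)
    (hScond : ∀ t, μ[Serv t | ℱ t] =ᵐ[μ] fun ω => (J t ω).elim 0 μs)
    (T : ℕ) (hT : 1 ≤ T) :
    (1 / (T : ℝ)) * ∑ t ∈ Finset.Icc 1 T, ∫ ω, Q t ω ∂μ
      ≤ 4 / ε + (8 / ε ^ 2) *
        (∫ ω, (∑ t ∈ Finset.Icc 1 T,
          max (lam + ε - (J t ω).elim 0 μs - ε / 2) 0 *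
            (if 1 ≤ Q t ω then (1 : ℝ) else 0)) ^ 2 ∂μ) / T := by
  have hε0 : 0 < ε := hε.1
  have hpath := ae_queue_path hQ1 hQdyn hA01 hS01
    (ae_serv_eq_zero_of_queue_eq_zero hQad hJempty hS01 hSmeas hScond)
  have hdrift := sum_le_sum fun t (ht : t ∈ Icc 1 T) => integral_sq_succ_sub_le (ε := ε) hμs0
    hQdyn hQad hJad hA01 hS01 hAmeas hSmeas hAcond hScond
    (hpath.mono fun ω h => h.1 t (mem_Icc.1 ht).1)
  have hQ1sq : ∫ ω, Q 1 ω ^ 2 ∂μ = 0 := by simp [hQ1]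
  rw [sum_Icc_sub hT (fun t => ∫ ω, Q t ω ^ 2 ∂μ), hQ1sq, sum_add_distrib, sum_sub_distrib,
    ← mul_sum, ← mul_sum, sum_const, Nat.card_Icc, Nat.add_sub_cancel, nsmul_eq_mul,
    mul_one] at hdrift
  have hQT : 0 ≤ ∫ ω, Q (T + 1) ω ^ 2 ∂μ := integral_nonneg fun ω => sq_nonneg _
  have hreg := two_mul_sum_integral_mul_le (lam := lam) hε0 hμs0 hQad hJad hQ1 hpath T
  unfold satisficingRegretTerm at hdrift hreg
  exact one_div_mul_le_of_half_mul_le hε0 (by positivity)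
    (integral_nonneg fun ω => sq_nonneg _) (by linarith)

/-- Regenerate-stage bound for the single-queue multi-server system: for any non-anticipatory
policy, the time-averaged expected queue length is at most `4/ε + (8/ε²)·E[SaR(T)²]/T`,
where `SaR(T) = ∑_{t≤T} (μ* − μ_{J(t)} − ε/2)⁺ 1{Q(t) ≥ 1}` is the satisficing regret.
The system has `K` servers with rates `μs k ∈ [0,1]`, `μ* = max_k μs k = λ + ε`; the policy
`J t` (with `none` denoting the null server of rate 0, chosen when the queue is empty) is
`ℱ t`-measurable via its rate, the queue is adapted, and arrivals/services in period `t` have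
conditional means `λ` and `μ_{J(t)}` given the history `ℱ t`. -/
theorem stmt_14 {Ω : Type*} {m0 : MeasurableSpace Ω} (μ : Measure Ω) [IsProbabilityMeasure μ]
    (ℱ : Filtration ℕ m0)
    (K : ℕ) (hK : 1 ≤ K)
    (lam ε : ℝ) (hlam0 : 0 ≤ lam) (hlam1 : lam < 1) (hε : ε ∈ Set.Ioc (0 : ℝ) 1)
    (μs : Fin K → ℝ) (hμs0 : ∀ k, 0 ≤ μs k) (hμs1 : ∀ k, μs k ≤ 1)
    (hmaxle : ∀ k, μs k ≤ lam + ε) (hmaxex : ∃ k, μs k = lam + ε)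
    (J : ℕ → Ω → Option (Fin K))
    (A Serv : ℕ → Ω → ℝ) (Q : ℕ → Ω → ℝ)
    (hQ1 : ∀ ω, Q 1 ω = 0)
    (hQdyn : ∀ t ω, Q (t + 1) ω = Q t ω - Serv t ω + A t ω)
    (hQad : Adapted ℱ Q)
    (hJad : ∀ t, Measurable[ℱ t] (fun ω => (J t ω).elim 0 μs))
    (hJempty : ∀ t ω, Q t ω = 0 → J t ω = none)
    (hA01 : ∀ t, ∀ᵐ ω ∂μ, A t ω = 0 ∨ A t ω = 1)
    (hS01 : ∀ t, ∀ᵐ ω ∂μ, Serv t ω = 0 ∨ Serv t ω = 1)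
    (hAmeas : ∀ t, Measurable (A t)) (hSmeas : ∀ t, Measurable (Serv t))
    (hAcond : ∀ t, μ[A t | ℱ t] =ᵐ[μ] fun _ => lam)
    (hScond : ∀ t, μ[Serv t | ℱ t] =ᵐ[μ] fun ω => (J t ω).elim 0 μs)
    (T : ℕ) (hT : 1 ≤ T) :
    (1 / (T : ℝ)) * ∑ t ∈ Finset.Icc 1 T, ∫ ω, Q t ω ∂μ
      ≤ 4 / ε + (8 / ε ^ 2) *
        (∫ ω, (∑ t ∈ Finset.Icc 1 T,
          max (lam + ε - (J t ω).elim 0 μs - ε / 2) 0 *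
            (if 1 ≤ Q t ω then (1 : ℝ) else 0)) ^ 2 ∂μ) / T :=
  stmt_14_general μ ℱ K lam ε hε μs hμs0 J A Serv Q hQ1 hQdyn hQad hJad hJempty hA01 hS01 hAmeas
    hSmeas hAcond hScond T hT
end

section
/- Let Ω = {ω_1 > ω_2 > ⋯ > ω_C} be positive reals, x > 0, and let (Δ(t))_{t=1}^T be a sequence with values in Ω ∪ {0}, and (σ(t))_{t=1}^T ∈ {0,1}^T with counter C(t) = #{τ < t : σ(τ) = 1}. Then ∑_{i=1}^{C̃} ω_i · #{t ≤ T : Δ(t) = ω_i, σ(t) = 1, C(t) ≤ x/ω_i²} ≤ ω_1 + x/ω_1 + ∑_{i=2}^{C̃} ω_i·(x/ω_i² − x/ω_{i−1}²), where C̃ ≤ C is any index. -/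
/-!
Every time counted for one of `ω 1 > ⋯ > ω k` is a selection time whose counter is at most
`x / ω k ^ 2`; the counter strictly increases along selection times, so these counts add up to at
most `x / ω k ^ 2 + 1`. Since the weights decrease, Abel summation turns these prefix bounds into
the telescoping bound: the weighted sum is largest when every prefix count is as large as allowed.
-/

open Finset

/-- The counter `C(t)` of the paper. -/
def selectionCount (σ : ℕ → Bool) (t : ℕ) : ℕ := #{τ ∈ Ico 1 t | σ τ = true}

noncomputable def cappedSelections (Δ : ℕ → ℝ) (σ : ℕ → Bool) (x : ℝ) (T : ℕ) (w : ℝ) :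
    Finset ℕ :=
  {t ∈ Icc 1 T | Δ t = w ∧ σ t = true ∧ (selectionCount σ t : ℝ) ≤ x / w ^ 2}

theorem selectionCount_lt_of_lt {σ : ℕ → Bool} {t t' : ℕ} (ht : 1 ≤ t) (hσ : σ t = true)
    (htt' : t < t') : selectionCount σ t < selectionCount σ t' := by
  apply card_lt_card
  rw [ssubset_iff_of_subset (filter_subset_filter _ (Ico_subset_Ico_right htt'.le))]
  exact ⟨t, by simp [ht, htt', hσ], by simp⟩

theorem strictMonoOn_selectionCount (σ : ℕ → Bool) :
    StrictMonoOn (selectionCount σ) {t | 1 ≤ t ∧ σ t = true} :=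
  fun _ ht _ _ htt' => selectionCount_lt_of_lt ht.1 ht.2 htt'

theorem card_le_of_selectionCount_le {σ : ℕ → Bool} {m : ℕ} {s : Finset ℕ}
    (hs : ∀ t ∈ s, (1 ≤ t ∧ σ t = true) ∧ selectionCount σ t ≤ m) : #s ≤ m + 1 := by
  calc #s ≤ #(range (m + 1)) :=
        card_le_card_of_injOn (selectionCount σ)
          (fun t ht => mem_range.2 (Nat.lt_succ_of_le (hs t ht).2))
          ((strictMonoOn_selectionCount σ).injOn.mono fun t ht => (hs t ht).1)
    _ = m + 1 := card_range _

theorem sum_card_cappedSelections_le (Δ : ℕ → ℝ) (σ : ℕ → Bool) {x : ℝ} (hx : 0 ≤ x) (T : ℕ)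
    {W : Finset ℝ} {w₀ : ℝ} (hw₀ : 0 < w₀) (hW : ∀ w ∈ W, w₀ ≤ w) :
    ∑ w ∈ W, (#(cappedSelections Δ σ x T w) : ℝ) ≤ x / w₀ ^ 2 + 1 := by
  have hdisj : (W : Set ℝ).PairwiseDisjoint (cappedSelections Δ σ x T) := by
    intro w _ w' _ hww'
    refine disjoint_left.2 fun t ht ht' => hww' ?_
    simp only [cappedSelections, mem_filter] at ht ht'
    rw [← ht.2.1, ← ht'.2.1]
  have hunion : #(W.biUnion (cappedSelections Δ σ x T)) ≤ ⌊x / w₀ ^ 2⌋₊ + 1 := by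
    refine card_le_of_selectionCount_le (σ := σ) fun t ht => ?_
    obtain ⟨w, hw, ht⟩ := mem_biUnion.1 ht
    simp only [cappedSelections, mem_filter, mem_Icc] at ht
    obtain ⟨⟨ht1, -⟩, -, hσ, hcount⟩ := ht
    have hcap : x / w ^ 2 ≤ x / w₀ ^ 2 :=
      div_le_div_of_nonneg_left hx (by positivity) (pow_le_pow_left₀ hw₀.le (hW w hw) 2)
    exact ⟨⟨ht1, hσ⟩, Nat.le_floor (hcount.trans hcap)⟩
  calc ∑ w ∈ W, (#(cappedSelections Δ σ x T w) : ℝ)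
      = #(W.biUnion (cappedSelections Δ σ x T)) := by rw [card_biUnion hdisj]; push_cast; rfl
    _ ≤ ⌊x / w₀ ^ 2⌋₊ + 1 := by exact_mod_cast hunion
    _ ≤ x / w₀ ^ 2 + 1 := by gcongr; exact Nat.floor_le (by positivity)

section AbelSummation

variable {R : Type*} [CommRing R] [LinearOrder R] [IsStrictOrderedRing R] {w N B : ℕ → R}

theorem sum_mul_add_mul_sub_le_of_sum_le {n : ℕ} (hn : 1 ≤ n) (hw : AntitoneOn w (Set.Icc 1 n))
    (hNB : ∀ k ∈ Icc 1 n, ∑ i ∈ Icc 1 k, N i ≤ B k) :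
    ∑ i ∈ Icc 1 n, w i * N i + w n * (B n - ∑ i ∈ Icc 1 n, N i)
      ≤ w 1 * B 1 + ∑ i ∈ Icc 2 n, w i * (B i - B (i - 1)) := by
  induction n, hn using Nat.le_induction with
  | base =>
    simp only [Icc_self, sum_singleton, Icc_eq_empty_of_lt one_lt_two, sum_empty, add_zero]
    exact le_of_eq (by ring)
  | succ n hn ih =>
    have ih := ih (hw.mono (Set.Icc_subset_Icc_right n.le_succ))
      fun k hk => hNB k (Icc_subset_Icc_right n.le_succ hk)
    have hwn : w (n + 1) ≤ w n := hw ⟨hn, n.le_succ⟩ ⟨by omega, le_rfl⟩ n.le_succ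
    have hNBn := hNB n (by simp [hn])
    rw [sum_Icc_succ_top (by omega), sum_Icc_succ_top (by omega), sum_Icc_succ_top (by omega),
      Nat.add_sub_cancel]
    nlinarith [mul_nonneg (sub_nonneg.2 hwn) (sub_nonneg.2 hNBn)]

theorem sum_mul_le_of_sum_le {n : ℕ} (hn : 1 ≤ n) (hw : AntitoneOn w (Set.Icc 1 n))
    (hwn : 0 ≤ w n) (hNB : ∀ k ∈ Icc 1 n, ∑ i ∈ Icc 1 k, N i ≤ B k) :
    ∑ i ∈ Icc 1 n, w i * N i ≤ w 1 * B 1 + ∑ i ∈ Icc 2 n, w i * (B i - B (i - 1)) := by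
  have hslack : 0 ≤ w n * (B n - ∑ i ∈ Icc 1 n, N i) :=
    mul_nonneg hwn (sub_nonneg.2 (hNB n (by simp [hn])))
  linarith [sum_mul_add_mul_sub_le_of_sum_le hn hw hNB]

end AbelSummation

theorem stmt_16 (C Ctil T : ℕ) (hC1 : 1 ≤ Ctil) (hCtil : Ctil ≤ C)
    (ω : ℕ → ℝ) (x : ℝ) (hx : 0 < x)
    (hpos : ∀ i ∈ Finset.Icc 1 C, 0 < ω i)
    (hdec : ∀ i ∈ Finset.Icc 2 C, ω i < ω (i - 1))
    (Δ : ℕ → ℝ) (σ : ℕ → Bool) :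
    ∑ i ∈ Finset.Icc 1 Ctil, ω i *
      (((Finset.Icc 1 T).filter (fun t =>
        Δ t = ω i ∧ σ t = true ∧
        ((((Finset.Ico 1 t).filter (fun τ => σ τ = true)).card : ℝ) ≤ x / (ω i) ^ 2))).card : ℝ)
      ≤ ω 1 + x / ω 1 + ∑ i ∈ Finset.Icc 2 Ctil, ω i * (x / (ω i) ^ 2 - x / (ω (i - 1)) ^ 2) := by
  have hanti : StrictAntiOn ω (Set.Icc 1 Ctil) :=
    strictAntiOn_of_lt_sub_one Set.ordConnected_Icc fun i _ hi hi' =>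
      hdec i (by simp only [Set.mem_Icc, mem_Icc] at hi hi' ⊢; omega)
  have hpos' : ∀ i ∈ Icc 1 Ctil, 0 < ω i := fun i hi => hpos i (Icc_subset_Icc_right hCtil hi)
  have hprefix : ∀ k ∈ Icc 1 Ctil,
      ∑ i ∈ Icc 1 k, (#(cappedSelections Δ σ x T (ω i)) : ℝ) ≤ x / ω k ^ 2 + 1 := by
    intro k hk
    have hsub : Set.Icc 1 k ⊆ Set.Icc 1 Ctil := Set.Icc_subset_Icc_right (mem_Icc.1 hk).2
    rw [← sum_image (f := fun w => (#(cappedSelections Δ σ x T w) : ℝ))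
      (hanti.injOn.mono (by rwa [coe_Icc]))]
    refine sum_card_cappedSelections_le Δ σ hx.le T (hpos' k hk) fun w hw => ?_
    obtain ⟨i, hi, rfl⟩ := mem_image.1 hw
    exact hanti.antitoneOn (hsub (by simpa using hi)) (by simpa using hk) (mem_Icc.1 hi).2
  have hω1 : ω 1 ≠ 0 := (hpos' 1 (by simp [hC1])).ne'
  calc _ ≤ ω 1 * (x / ω 1 ^ 2 + 1)
        + ∑ i ∈ Icc 2 Ctil, ω i * ((x / ω i ^ 2 + 1) - (x / ω (i - 1) ^ 2 + 1)) :=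
        sum_mul_le_of_sum_le hC1 hanti.antitoneOn (hpos' Ctil (by simp [hC1])).le hprefix
    _ = _ := by
        congr 1
        · field_simp
          ring
        · exact sum_congr rfl fun i _ => by ring
end

section
/- In a multi-queue multi-server system with traffic slackness ε, i.e., λ_n + ε ≤ ∑_{σ ∈ Σ} φ_σ ∑_{k ∈ B_n} σ_k μ_k for all queues n and some probability distribution φ over Σ, and with the weight W_σ(t) = ∑_n Q_n(t) ∑_{k ∈ B_n} σ_k μ_k: for any period t and chosen feasible schedule σ(t), ∑_n λ_n Q_n(t) − W_{σ(t)}(t) ≤ −ε·∑_n Q_n(t) + M_Σ² + Δ(t)·‖Q(t)‖_∞, where M_Σ = max_{σ ∈ Σ} ∑_n ∑_{k ∈ B_n} σ_k and Δ(t) = (W_{σ^MW(t)}(t) − W_{σ(t)}(t))/‖Q(t)‖_∞ (and Δ(t) = 0 when ‖Q(t)‖_∞ = 0) with σ^MW(t) the weight-maximizing feasible schedule. -/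
/-!
By slackness, `∑ₙ (λₙ + ε) Qₙ` is at most the `φ`-average of the weights `W_σ`, `σ ∈ Σ`. A schedule
`σ ∈ Σ` need not be feasible for the current queue lengths, but dropping every server of an
over-scheduled queue makes it feasible, hence of weight at most `W_{σ^MW}`. Each dropped server `k`
has `Q_{B k} < |σ| ≤ M_Σ` and `μ_k ≤ 1`, and at most `M_Σ` servers are dropped, so
`W_σ ≤ W_{σ^MW} + M_Σ²`. Finally `Δ ‖Q‖_∞ = W_{σ^MW} - W_σ` (both sides vanish when `Q = 0`).
-/

open Finset

namespace MaxWeight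

variable {N K : Type*} (B : K → N) (Q : N → ℕ) (μ : K → ℝ)

def weight (σ : Finset K) : ℝ := ∑ k ∈ σ, (Q (B k) : ℝ) * μ k

lemma weight_eq_zero_of_sup_eq_zero [Fintype N] (h : univ.sup Q = 0) (σ : Finset K) :
    weight B Q μ σ = 0 := by
  refine sum_eq_zero fun k _ => ?_
  have hQ : Q (B k) = 0 := Nat.le_zero.1 (h ▸ le_sup (mem_univ (B k)))
  rw [hQ, Nat.cast_zero, zero_mul]

variable [DecidableEq N]

lemma weight_eq_sum_queue [Fintype N] (σ : Finset K) :
    weight B Q μ σ = ∑ n, (Q n : ℝ) * ∑ k ∈ σ with B k = n, μ k := by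
  rw [weight, ← sum_fiberwise σ B]
  refine sum_congr rfl fun n _ => ?_
  rw [mul_sum]
  exact sum_congr rfl fun k hk => by rw [(mem_filter.1 hk).2]

lemma sum_mul_add_le_sum_weight [Fintype N] (Sig : Finset (Finset K)) (φ : Finset K → ℝ)
    (lam : N → ℝ) (ε : ℝ)
    (hslack : ∀ n, lam n + ε ≤ ∑ σ ∈ Sig, φ σ * ∑ k ∈ σ with B k = n, μ k) :
    ∑ n, lam n * (Q n : ℝ) + ε * ∑ n, (Q n : ℝ) ≤ ∑ σ ∈ Sig, φ σ * weight B Q μ σ :=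
  calc ∑ n, lam n * (Q n : ℝ) + ε * ∑ n, (Q n : ℝ) = ∑ n, (Q n : ℝ) * (lam n + ε) := by
        rw [mul_sum, ← sum_add_distrib]
        exact sum_congr rfl fun n _ => by ring
    _ ≤ ∑ n, (Q n : ℝ) * ∑ σ ∈ Sig, φ σ * ∑ k ∈ σ with B k = n, μ k := by
        gcongr with n
        exact hslack n
    _ = ∑ σ ∈ Sig, φ σ * weight B Q μ σ := by
        simp_rw [weight_eq_sum_queue, mul_sum]
        rw [sum_comm]
        exact sum_congr rfl fun σ _ => sum_congr rfl fun n _ => sum_congr rfl fun k _ => by ring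

def dropOverloaded (σ : Finset K) : Finset K :=
  {k ∈ σ | #{j ∈ σ | B j = B k} ≤ Q (B k)}

lemma dropOverloaded_subset (σ : Finset K) : dropOverloaded B Q σ ⊆ σ :=
  filter_subset _ _

lemma card_filter_dropOverloaded_le (σ : Finset K) (n : N) :
    #{k ∈ dropOverloaded B Q σ | B k = n} ≤ Q n := by
  by_cases h : #{k ∈ σ | B k = n} ≤ Q n
  · exact (card_le_card (filter_subset_filter _ (dropOverloaded_subset B Q σ))).trans h
  · rw [card_eq_zero.2 (filter_eq_empty_iff.2 ?_)]
    · exact Nat.zero_le _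
    · rintro k hk rfl
      exact h (mem_filter.1 hk).2

lemma weight_sub_weight_dropOverloaded_le (hμ : ∀ k, μ k ≤ 1) (σ : Finset K) :
    weight B Q μ σ - weight B Q μ (dropOverloaded B Q σ) ≤ (#σ : ℝ) ^ 2 := by
  classical
  have hdropped : ∀ k ∈ σ \ dropOverloaded B Q σ, (Q (B k) : ℝ) * μ k ≤ #σ := by
    intro k hk
    obtain ⟨hkσ, hkd⟩ := mem_sdiff.1 hk
    have hQ : Q (B k) < #{j ∈ σ | B j = B k} :=
      not_le.1 fun h => hkd (mem_filter.2 ⟨hkσ, h⟩)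
    have hQσ : (Q (B k) : ℝ) ≤ #σ := by exact_mod_cast hQ.le.trans (card_filter_le _ _)
    calc (Q (B k) : ℝ) * μ k ≤ (Q (B k) : ℝ) * 1 := by gcongr; exact hμ k
      _ ≤ #σ := by rwa [mul_one]
  calc weight B Q μ σ - weight B Q μ (dropOverloaded B Q σ)
        = ∑ k ∈ σ \ dropOverloaded B Q σ, (Q (B k) : ℝ) * μ k := by
          rw [weight, weight, ← sum_sdiff (dropOverloaded_subset B Q σ)]
          ring
    _ ≤ #(σ \ dropOverloaded B Q σ) • (#σ : ℝ) := sum_le_card_nsmul _ _ _ hdropped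
    _ ≤ #σ • (#σ : ℝ) := by gcongr; exact sdiff_subset
    _ = (#σ : ℝ) ^ 2 := by rw [nsmul_eq_mul, sq]

end MaxWeight

open MaxWeight

theorem stmt_17_general {Nq Ks : Type*} [Fintype Nq] [DecidableEq Nq]
    (B : Ks → Nq) (Sig : Finset (Finset Ks))
    (hsub : ∀ σ ∈ Sig, ∀ σ' ⊆ σ, σ' ∈ Sig)
    (μs : Ks → ℝ) (hμ1 : ∀ k, μs k ≤ 1)
    (Q : Nq → ℕ) (lam : Nq → ℝ) (ε : ℝ)
    (φ : Finset Ks → ℝ)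
    (hφ0 : ∀ σ ∈ Sig, 0 ≤ φ σ) (hφ1 : ∑ σ ∈ Sig, φ σ = 1)
    (hslack : ∀ n, lam n + ε ≤
      ∑ σ ∈ Sig, φ σ * ∑ k ∈ σ.filter (fun k => B k = n), μs k)
    (MSig : ℕ) (hM : ∀ σ ∈ Sig, σ.card ≤ MSig)
    (W : Finset Ks → ℝ)
    (hW : ∀ σ, W σ = ∑ k ∈ σ, (Q (B k) : ℝ) * μs k)
    (σMW σsel : Finset Ks)
    (hMWopt : ∀ σ ∈ Sig, (∀ n, (σ.filter (fun k => B k = n)).card ≤ Q n) → W σ ≤ W σMW)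
    (Δ : ℝ)
    (hΔ : Δ = if (Finset.univ.sup Q : ℕ) = 0 then 0
      else (W σMW - W σsel) / ((Finset.univ.sup Q : ℕ) : ℝ)) :
    ∑ n, lam n * (Q n : ℝ) - W σsel
      ≤ -ε * ∑ n, (Q n : ℝ) + (MSig : ℝ) ^ 2 + Δ * ((Finset.univ.sup Q : ℕ) : ℝ) := by
  obtain rfl : W = weight B Q μs := funext hW
  have hbound : ∀ σ ∈ Sig, weight B Q μs σ ≤ weight B Q μs σMW + (MSig : ℝ) ^ 2 := by
    intro σ hσ
    have hopt := hMWopt _ (hsub σ hσ _ (dropOverloaded_subset B Q σ))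
      (card_filter_dropOverloaded_le B Q σ)
    have hdrop := weight_sub_weight_dropOverloaded_le B Q μs hμ1 σ
    have hcard : (#σ : ℝ) ^ 2 ≤ (MSig : ℝ) ^ 2 := by gcongr; exact_mod_cast hM σ hσ
    linarith
  have havg : ∑ σ ∈ Sig, φ σ * weight B Q μs σ ≤ weight B Q μs σMW + (MSig : ℝ) ^ 2 :=
    calc ∑ σ ∈ Sig, φ σ * weight B Q μs σ
          ≤ ∑ σ ∈ Sig, φ σ * (weight B Q μs σMW + (MSig : ℝ) ^ 2) :=
          sum_le_sum fun σ hσ => mul_le_mul_of_nonneg_left (hbound σ hσ) (hφ0 σ hσ)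
      _ = weight B Q μs σMW + (MSig : ℝ) ^ 2 := by rw [← sum_mul, hφ1, one_mul]
  have hΔQ : Δ * ((univ.sup Q : ℕ) : ℝ) = weight B Q μs σMW - weight B Q μs σsel := by
    split_ifs at hΔ with h0
    · simp [hΔ, weight_eq_zero_of_sup_eq_zero B Q μs h0]
    · rw [hΔ, div_mul_cancel₀ _ (Nat.cast_ne_zero.2 h0)]
  linarith [sum_mul_add_le_sum_weight B Q μs Sig φ lam ε hslack]

/-- Lemma (multi-queue multi-server weight bound): under traffic slackness ε witnessed by a
distribution φ over the feasible schedule set `Sig`, for any chosen feasible schedule `σsel`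
and the MaxWeight feasible schedule `σMW`, the weight loss obeys
`∑ λ_n Q_n − W(σsel) ≤ −ε ∑ Q_n + M_Σ² + Δ · ‖Q‖_∞`. -/
theorem stmt_17 {Nq Ks : Type*} [Fintype Nq] [Fintype Ks] [DecidableEq Nq] [DecidableEq Ks]
    (B : Ks → Nq) (Sig : Finset (Finset Ks))
    (hsub : ∀ σ ∈ Sig, ∀ σ' ⊆ σ, σ' ∈ Sig)
    (μs : Ks → ℝ) (hμ0 : ∀ k, 0 ≤ μs k) (hμ1 : ∀ k, μs k ≤ 1)
    (Q : Nq → ℕ) (lam : Nq → ℝ) (ε : ℝ) (hε : 0 < ε)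
    (φ : Finset Ks → ℝ)
    (hφ0 : ∀ σ ∈ Sig, 0 ≤ φ σ) (hφ1 : ∑ σ ∈ Sig, φ σ = 1)
    (hslack : ∀ n, lam n + ε ≤
      ∑ σ ∈ Sig, φ σ * ∑ k ∈ σ.filter (fun k => B k = n), μs k)
    (MSig : ℕ) (hM : ∀ σ ∈ Sig, σ.card ≤ MSig)
    (W : Finset Ks → ℝ)
    (hW : ∀ σ, W σ = ∑ k ∈ σ, (Q (B k) : ℝ) * μs k)
    (σMW σsel : Finset Ks)
    (hMWmem : σMW ∈ Sig)
    (hMWfeas : ∀ n, (σMW.filter (fun k => B k = n)).card ≤ Q n)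
    (hMWopt : ∀ σ ∈ Sig, (∀ n, (σ.filter (fun k => B k = n)).card ≤ Q n) → W σ ≤ W σMW)
    (hselmem : σsel ∈ Sig)
    (hselfeas : ∀ n, (σsel.filter (fun k => B k = n)).card ≤ Q n)
    (Δ : ℝ)
    (hΔ : Δ = if (Finset.univ.sup Q : ℕ) = 0 then 0
      else (W σMW - W σsel) / ((Finset.univ.sup Q : ℕ) : ℝ)) :
    ∑ n, lam n * (Q n : ℝ) - W σsel
      ≤ -ε * ∑ n, (Q n : ℝ) + (MSig : ℝ) ^ 2 + Δ * ((Finset.univ.sup Q : ℕ) : ℝ) :=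
  stmt_17_general B Sig hsub μs hμ1 Q lam ε φ hφ0 hφ1 hslack MSig hM W hW σMW σsel hMWopt Δ hΔ
end
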